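/- arXiv:math/0209079 — 4 statements merged into one kernel-verified Lean document; each statement's English description precedes it below -/
import Mathlib

section
/- The translation operators T_a defined by T_a φ(p) = φ(p − a) are bounded operators on L²_r(ℝⁿ), and ‖T_a‖ is not equal to 1 for a ≠ 0 (T_a is not unitary); moreover ‖T_a‖ → ∞ as |a| → ∞ (along, e.g., a = t e_1, t → ∞). -/
open MeasureTheory Filter

noncomputable section

/-- The relativistic energy `E(p) = √(|p|² + m²)`. -/
def energy {n : ℕ} (m : ℝ) (p : EuclideanSpace ℝ (Fin n)) : ℝ :=
  Real.sqrt (‖p‖ ^ 2 + m ^ 2)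

/-- Membership in the relativistic momentum Hilbert space `L²_r(ℝⁿ) = L²(ℝⁿ, dp/E(p))`. -/
def MemL2r {n : ℕ} (m : ℝ) (φ : EuclideanSpace ℝ (Fin n) → ℂ) : Prop :=
  AEStronglyMeasurable φ volume ∧ Integrable (fun p => ‖φ p‖ ^ 2 / energy m p)

/-- The norm `‖φ‖_r = (∫ |φ(p)|² dp/E(p))^{1/2}` of `L²_r(ℝⁿ)`. -/
def rnorm {n : ℕ} (m : ℝ) (φ : EuclideanSpace ℝ (Fin n) → ℂ) : ℝ :=
  Real.sqrt (∫ p, ‖φ p‖ ^ 2 / energy m p)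

/-- `φ` lies in the (maximal) domain of the Klein–Gordon position operator `Q_i`, with
`g = ∂φ/∂p_i` its weak (distributional) `i`-th partial derivative; so `Q_i φ = i • g`.
This encodes: `φ, ∂φ/∂p_i ∈ L²_r(ℝⁿ)` and `φ` is locally absolutely continuous along
almost every line parallel to the `i`-th axis with derivative `g`. -/
def InDomQ {n : ℕ} (m : ℝ) (i : Fin n) (φ g : EuclideanSpace ℝ (Fin n) → ℂ) : Prop :=
  MemL2r m φ ∧ MemL2r m g ∧
    ∀ η : EuclideanSpace ℝ (Fin n) → ℂ, ContDiff ℝ (⊤ : ℕ∞) η → HasCompactSupport η →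
      ∫ p, φ p * fderiv ℝ η p (EuclideanSpace.single i 1) = -∫ p, g p * η p

/-- The translation operator `T_a φ(p) = φ(p − a)` on functions. -/
def transl {n : ℕ} (a : EuclideanSpace ℝ (Fin n)) (φ : EuclideanSpace ℝ (Fin n) → ℂ) :
    EuclideanSpace ℝ (Fin n) → ℂ :=
  fun p => φ (p - a)

/-- The operator norm on `L²_r(ℝⁿ)` of a map on functions: the supremum of `‖Tφ‖_r` over
the unit ball of `L²_r(ℝⁿ)`. -/
def opNormR {n : ℕ} (m : ℝ)
    (T : (EuclideanSpace ℝ (Fin n) → ℂ) → EuclideanSpace ℝ (Fin n) → ℂ) : ℝ :=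
  ⨆ φ : {φ : EuclideanSpace ℝ (Fin n) → ℂ // MemL2r m φ ∧ rnorm m φ ≤ 1},
    rnorm m (T φ.1)

section Aux
open Metric
variable {n : ℕ} {m : ℝ}

lemma energy_pos (hm : 0 < m) (p : EuclideanSpace ℝ (Fin n)) : 0 < energy m p :=
  Real.sqrt_pos.2 (by positivity)

lemma le_energy (hm : 0 < m) (p : EuclideanSpace ℝ (Fin n)) : m ≤ energy m p :=
  Real.le_sqrt_of_sq_le (by nlinarith [sq_nonneg ‖p‖])

lemma norm_le_energy (hm : 0 < m) (p : EuclideanSpace ℝ (Fin n)) : ‖p‖ ≤ energy m p :=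
  Real.le_sqrt_of_sq_le (by nlinarith)

lemma energy_le (hm : 0 < m) (p q : EuclideanSpace ℝ (Fin n)) :
    energy m p ≤ energy m q + ‖p - q‖ := by
  have h1 : ‖p‖ ≤ ‖q‖ + ‖p - q‖ := norm_le_norm_add_norm_sub' p q
  have h2 : ‖q‖ ≤ energy m q := norm_le_energy hm q
  have h3 : energy m q ^ 2 = ‖q‖ ^ 2 + m ^ 2 := Real.sq_sqrt (by positivity)
  rw [energy, Real.sqrt_le_iff]
  constructor
  · nlinarith [energy_pos hm q, norm_nonneg (p - q)]
  · nlinarith [norm_nonneg (p - q), norm_nonneg p, norm_nonneg q]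

lemma energy_le' (hm : 0 < m) (p : EuclideanSpace ℝ (Fin n)) (r : ℝ) (hp : ‖p‖ ≤ r) :
    energy m p ≤ Real.sqrt (r ^ 2 + m ^ 2) :=
  Real.sqrt_le_sqrt (by nlinarith [norm_nonneg p])

lemma continuous_energy : Continuous (energy m (n := n)) :=
  ((continuous_norm.pow 2).add continuous_const).sqrt

lemma transl_bounded (hm : 0 < m) (a : EuclideanSpace ℝ (Fin n)) (φ : EuclideanSpace ℝ (Fin n) → ℂ)
    (hφ : MemL2r m φ) : MemL2r m (transl a φ) ∧
    rnorm m (transl a φ) ≤ Real.sqrt (1 + ‖a‖ / m) * rnorm m φ := by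
  obtain ⟨hmeas, hint⟩ := hφ
  have hK0 : (0:ℝ) < 1 + ‖a‖ / m := by positivity
  -- pointwise bound
  have hpt : ∀ p, ‖transl a φ p‖ ^ 2 / energy m p ≤
      (1 + ‖a‖ / m) * (‖φ (p - a)‖ ^ 2 / energy m (p - a)) := by
    intro p
    have h3 : m ≤ energy m p := le_energy hm p
    have h5 : ‖a‖ ≤ ‖a‖ / m * energy m p := by
      rw [div_mul_eq_mul_div, le_div_iff₀ hm]
      exact mul_le_mul_of_nonneg_left h3 (norm_nonneg a)
    have hE : energy m (p - a) ≤ (1 + ‖a‖ / m) * energy m p := by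
      have h1 : energy m (p - a) ≤ energy m p + ‖a‖ := by
        simpa using energy_le hm (p - a) p
      nlinarith
    show ‖φ (p - a)‖ ^ 2 / energy m p ≤ _
    rw [← mul_div_assoc, div_le_div_iff₀ (energy_pos hm p) (energy_pos hm (p - a))]
    nlinarith [mul_le_mul_of_nonneg_left hE (sq_nonneg ‖φ (p - a)‖),
      sq_nonneg ‖φ (p - a)‖, energy_pos hm p]
  have hmp : MeasurePreserving (fun p : EuclideanSpace ℝ (Fin n) => p - a) volume volume :=
    measurePreserving_sub_right volume a
  have hmeas' : AEStronglyMeasurable (transl a φ) volume :=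
    hmeas.comp_quasiMeasurePreserving hmp.quasiMeasurePreserving
  have hintc : Integrable (fun p => ‖φ (p - a)‖ ^ 2 / energy m (p - a)) := by
    have h := (hmp.integrable_comp (ν := volume) hint.aestronglyMeasurable).2 hint
    simpa [Function.comp_def] using h
  have hint' : Integrable (fun p => ‖transl a φ p‖ ^ 2 / energy m p) := by
    apply (hintc.const_mul (1 + ‖a‖ / m)).mono'
    · have hA : AEStronglyMeasurable (fun p => ‖transl a φ p‖ ^ 2 * (energy m p)⁻¹) volume :=
        (hmeas'.norm.pow 2).mul continuous_energy.measurable.inv.aestronglyMeasurable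
      simpa [div_eq_mul_inv] using hA
    · filter_upwards with p
      rw [Real.norm_eq_abs, abs_of_nonneg
        (div_nonneg (by positivity) (energy_pos hm p).le)]
      exact hpt p
  refine ⟨⟨hmeas', hint'⟩, ?_⟩
  rw [rnorm, rnorm, ← Real.sqrt_mul hK0.le]
  apply Real.sqrt_le_sqrt
  calc ∫ p, ‖transl a φ p‖ ^ 2 / energy m p
      ≤ ∫ p, (1 + ‖a‖ / m) * (‖φ (p - a)‖ ^ 2 / energy m (p - a)) :=
        integral_mono hint' (hintc.const_mul _) hpt
    _ = (1 + ‖a‖ / m) * ∫ p, ‖φ (p - a)‖ ^ 2 / energy m (p - a) := integral_const_mul _ _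
    _ = (1 + ‖a‖ / m) * ∫ p, ‖φ p‖ ^ 2 / energy m p := by
        rw [integral_sub_right_eq_self (fun p => ‖φ p‖ ^ 2 / energy m p) a]

lemma energy_neg (a : EuclideanSpace ℝ (Fin n)) : energy m (-a) = energy m a := by
  simp [energy]

lemma integrableOn_inv_energy (hm : 0 < m) (x : EuclideanSpace ℝ (Fin n)) (r : ℝ) :
    IntegrableOn (fun p => (energy m p)⁻¹) (ball x r) volume := by
  have hc : Continuous fun p : EuclideanSpace ℝ (Fin n) => (energy m p)⁻¹ :=
    continuous_energy.inv₀ fun p => (energy_pos hm p).ne'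
  exact (hc.locallyIntegrable.integrableOn_isCompact (isCompact_closedBall x r)).mono_set
    ball_subset_closedBall

lemma bddAbove_opNorm (hm : 0 < m) (a : EuclideanSpace ℝ (Fin n)) :
    BddAbove (Set.range fun φ : {φ : EuclideanSpace ℝ (Fin n) → ℂ //
      MemL2r m φ ∧ rnorm m φ ≤ 1} => rnorm m (transl a φ.1)) := by
  refine ⟨Real.sqrt (1 + ‖a‖ / m), ?_⟩
  rintro x ⟨φ, rfl⟩
  calc rnorm m (transl a φ.1) ≤ Real.sqrt (1 + ‖a‖ / m) * rnorm m φ.1 :=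
        (transl_bounded hm a _ φ.2.1).2
    _ ≤ Real.sqrt (1 + ‖a‖ / m) * 1 :=
        mul_le_mul_of_nonneg_left φ.2.2 (Real.sqrt_nonneg _)
    _ = Real.sqrt (1 + ‖a‖ / m) := mul_one _

lemma key (hm : 0 < m) (a : EuclideanSpace ℝ (Fin n)) {r : ℝ} (hr : 0 < r)
    (hra : r < energy m a) :
    Real.sqrt ((energy m a - r) / Real.sqrt (r ^ 2 + m ^ 2)) ≤ opNormR m (transl a) := by
  have hS : 0 < Real.sqrt (r ^ 2 + m ^ 2) := Real.sqrt_pos.2 (by positivity)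
  have hEa : 0 < energy m a - r := sub_pos.2 hra
  set I₁ : ℝ := ∫ p in ball (-a) r, (energy m p)⁻¹ with hI₁def
  set I₀ : ℝ := ∫ p in ball (0 : EuclideanSpace ℝ (Fin n)) r, (energy m p)⁻¹ with hI₀def
  set vol : ℝ := (volume (ball (0 : EuclideanSpace ℝ (Fin n)) r)).toReal with hvoldef
  have hvolpos : 0 < vol :=
    ENNReal.toReal_pos (measure_ball_pos volume _ hr).ne' measure_ball_lt_top.ne
  have hvol₁ : (volume (ball (-a) r)).toReal = vol := by
    rw [hvoldef, Measure.addHaar_ball_center]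
  have hconst : ∀ (x : EuclideanSpace ℝ (Fin n)) (c : ℝ),
      IntegrableOn (fun _ => c) (ball x r) volume :=
    fun x c => integrableOn_const measure_ball_lt_top.ne
  -- lower bound on I₀
  have hI₀ : vol * (Real.sqrt (r ^ 2 + m ^ 2))⁻¹ ≤ I₀ := by
    have h := setIntegral_mono_on (hconst 0 (Real.sqrt (r ^ 2 + m ^ 2))⁻¹)
      (integrableOn_inv_energy hm 0 r) measurableSet_ball
      (fun p hp => by
        refine inv_anti₀ (energy_pos hm p) ?_
        exact energy_le' hm p r (le_of_lt (mem_ball_zero_iff.1 hp)))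
    rwa [setIntegral_const, smul_eq_mul] at h
  -- upper bound on I₁
  have hI₁ : I₁ ≤ vol * (energy m a - r)⁻¹ := by
    have h := setIntegral_mono_on (integrableOn_inv_energy hm (-a) r)
      (hconst (-a) (energy m a - r)⁻¹) measurableSet_ball
      (fun p hp => by
        have h1 : energy m (-a) ≤ energy m p + ‖-a - p‖ := energy_le hm (-a) p
        have h2 : ‖-a - p‖ < r := by
          rw [← dist_eq_norm]
          rw [mem_ball] at hp
          rw [dist_comm]
          exact hp
        rw [energy_neg] at h1
        exact inv_anti₀ hEa (by linarith))
    rwa [setIntegral_const, smul_eq_mul, measureReal_def, hvol₁] at h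
  -- positivity of I₁
  have hI₁pos : 0 < I₁ := by
    have h := setIntegral_mono_on (hconst (-a) (energy m a + r)⁻¹)
      (integrableOn_inv_energy hm (-a) r) measurableSet_ball
      (fun p hp => by
        have h1 : energy m p ≤ energy m (-a) + ‖p - -a‖ := energy_le hm p (-a)
        have h2 : ‖p - -a‖ < r := by rw [← dist_eq_norm]; exact mem_ball.1 hp
        rw [energy_neg] at h1
        refine inv_anti₀ (energy_pos hm p) (by linarith))
    rw [setIntegral_const, smul_eq_mul, measureReal_def, hvol₁] at h
    have : 0 < vol * (energy m a + r)⁻¹ := by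
      apply mul_pos hvolpos
      exact inv_pos.2 (by linarith [energy_pos hm a])
    linarith
  have hsqI₁ : 0 < Real.sqrt I₁ := Real.sqrt_pos.2 hI₁pos
  set c : ℝ := (Real.sqrt I₁)⁻¹ with hcdef
  have hc : 0 < c := inv_pos.2 hsqI₁
  have hc2 : c ^ 2 = I₁⁻¹ := by
    rw [hcdef, inv_pow, Real.sq_sqrt hI₁pos.le]
  set ψ : EuclideanSpace ℝ (Fin n) → ℂ :=
    Set.indicator (ball (-a) r) (fun _ => (c : ℂ)) with hψdef
  -- general computation for indicator functions
  have hind : ∀ x : EuclideanSpace ℝ (Fin n),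
      (fun p => ‖Set.indicator (ball x r) (fun _ => (c : ℂ)) p‖ ^ 2 / energy m p) =
        Set.indicator (ball x r) (fun p => c ^ 2 * (energy m p)⁻¹) := by
    intro x
    funext p
    by_cases hp : p ∈ ball x r
    · simp [Set.indicator_of_mem hp, Complex.norm_real, abs_of_nonneg hc.le,
        div_eq_mul_inv]
    · simp [Set.indicator_of_notMem hp]
  have hintind : ∀ x : EuclideanSpace ℝ (Fin n),
      Integrable (fun p => ‖Set.indicator (ball x r) (fun _ => (c : ℂ)) p‖ ^ 2 / energy m p) := by
    intro x
    rw [hind x]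
    rw [integrable_indicator_iff measurableSet_ball]
    exact (integrableOn_inv_energy hm x r).const_mul _
  have hmeasind : ∀ x : EuclideanSpace ℝ (Fin n),
      AEStronglyMeasurable (Set.indicator (ball x r) (fun _ => (c : ℂ))) volume :=
    fun x => (stronglyMeasurable_const.indicator measurableSet_ball).aestronglyMeasurable
  have hcalc : ∀ x : EuclideanSpace ℝ (Fin n),
      (∫ p, ‖Set.indicator (ball x r) (fun _ => (c : ℂ)) p‖ ^ 2 / energy m p) =
        c ^ 2 * ∫ p in ball x r, (energy m p)⁻¹ := by
    intro x
    rw [hind x, integral_indicator measurableSet_ball, integral_const_mul]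
  have hψmem : MemL2r m ψ := ⟨hmeasind (-a), hintind (-a)⟩
  have hψnorm : rnorm m ψ ≤ 1 := by
    rw [rnorm, hψdef, hcalc (-a), ← hI₁def, hc2, inv_mul_cancel₀ hI₁pos.ne', Real.sqrt_one]
  -- translation of ψ
  have htransl : transl a ψ = Set.indicator (ball (0 : EuclideanSpace ℝ (Fin n)) r)
      (fun _ => (c : ℂ)) := by
    funext p
    have hmem : p - a ∈ ball (-a) r ↔ p ∈ ball (0 : EuclideanSpace ℝ (Fin n)) r := by
      rw [mem_ball, mem_ball, dist_eq_norm, dist_eq_norm]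
      simp [sub_neg_eq_add, sub_add_cancel]
    rw [transl, hψdef]
    by_cases hp : p ∈ ball (0 : EuclideanSpace ℝ (Fin n)) r
    · rw [Set.indicator_of_mem (hmem.2 hp), Set.indicator_of_mem hp]
    · rw [Set.indicator_of_notMem (fun h => hp (hmem.1 h)), Set.indicator_of_notMem hp]
  have hTψ : rnorm m (transl a ψ) = Real.sqrt (c ^ 2 * I₀) := by
    rw [rnorm, htransl, hcalc 0, hI₀def]
  -- the sup bound
  have hle : rnorm m (transl a ψ) ≤ opNormR m (transl a) :=
    le_ciSup (bddAbove_opNorm hm a) ⟨ψ, hψmem, hψnorm⟩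
  refine le_trans ?_ hle
  rw [hTψ]
  apply Real.sqrt_le_sqrt
  rw [hc2, ← div_eq_inv_mul, div_le_div_iff₀ hS hI₁pos]
  have h1 : (energy m a - r) * I₁ ≤ vol :=
    calc (energy m a - r) * I₁ ≤ (energy m a - r) * (vol * (energy m a - r)⁻¹) :=
          mul_le_mul_of_nonneg_left hI₁ hEa.le
      _ = vol := by field_simp
  have h2 : vol ≤ I₀ * Real.sqrt (r ^ 2 + m ^ 2) := by
    have := mul_le_mul_of_nonneg_right hI₀ hS.le
    rwa [mul_assoc, inv_mul_cancel₀ hS.ne', mul_one] at this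
  linarith

lemma energy_eq_sqrt (t : ℝ) (i : Fin n) :
    energy m (t • EuclideanSpace.single i (1:ℝ)) = Real.sqrt (t ^ 2 + m ^ 2) := by
  rw [energy, norm_smul, EuclideanSpace.norm_single]
  simp [mul_pow, sq_abs]

end Aux

/-- each `T_a` is a bounded operator on `L²_r(ℝⁿ)`; for `a ≠ 0` its operator
norm is not `1` (in particular `T_a` is not unitary); and `‖T_{t e₁}‖ → ∞` as `t → ∞`. -/
theorem transl_bounded_not_unitary {n : ℕ} (m : ℝ) (hm : 0 < m) (hn : 0 < n) :
    (∀ a : EuclideanSpace ℝ (Fin n), ∃ C : ℝ, ∀ φ, MemL2r m φ →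
      MemL2r m (transl a φ) ∧ rnorm m (transl a φ) ≤ C * rnorm m φ) ∧
    (∀ a : EuclideanSpace ℝ (Fin n), a ≠ 0 → opNormR m (transl a) ≠ 1) ∧
    Tendsto (fun t : ℝ => opNormR m (transl (t • EuclideanSpace.single (⟨0, hn⟩ : Fin n) 1)))
      atTop atTop := by
  refine ⟨fun a => ⟨Real.sqrt (1 + ‖a‖ / m), fun φ hφ => transl_bounded hm a φ hφ⟩, ?_, ?_⟩
  · intro a ha
    have hna : 0 < ‖a‖ := norm_pos_iff.2 ha
    have hEa : m < energy m a := (Real.lt_sqrt hm.le).2 (by nlinarith)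
    set r : ℝ := (energy m a - m) / 2 with hrdef
    have hr : 0 < r := by rw [hrdef]; linarith
    have hra : r < energy m a := by rw [hrdef]; linarith
    have hk := key hm a hr hra
    have heq : energy m a - r = r + m := by rw [hrdef]; ring
    have hSlt : Real.sqrt (r ^ 2 + m ^ 2) < r + m := by
      have h1 : Real.sqrt (r ^ 2 + m ^ 2) < Real.sqrt ((r + m) ^ 2) :=
        Real.sqrt_lt_sqrt (by positivity) (by nlinarith)
      rwa [Real.sqrt_sq (by positivity)] at h1
    have h2 : 1 < (energy m a - r) / Real.sqrt (r ^ 2 + m ^ 2) := by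
      rw [heq, lt_div_iff₀ (Real.sqrt_pos.2 (by positivity)), one_mul]
      exact hSlt
    have h3 : 1 < Real.sqrt ((energy m a - r) / Real.sqrt (r ^ 2 + m ^ 2)) :=
      (Real.lt_sqrt zero_le_one).2 (by simpa using h2)
    exact (lt_of_lt_of_le h3 hk).ne'
  · set i : Fin n := ⟨0, hn⟩
    set S : ℝ := Real.sqrt (m ^ 2 + m ^ 2) with hSdef
    have hSpos : 0 < S := Real.sqrt_pos.2 (by positivity)
    have hsqrt : Tendsto Real.sqrt atTop atTop :=
      tendsto_atTop.2 fun M => eventually_atTop.2 ⟨M ^ 2, fun x hx => Real.le_sqrt_of_sq_le hx⟩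
    have hlin : Tendsto (fun t : ℝ => (t - m) / S) atTop atTop :=
      (tendsto_atTop_add_const_right atTop (-m) tendsto_id).atTop_div_const hSpos
    have hf : Tendsto (fun t : ℝ => Real.sqrt ((t - m) / S)) atTop atTop := hsqrt.comp hlin
    apply tendsto_atTop_mono' atTop ?_ hf
    filter_upwards [eventually_ge_atTop (1 : ℝ)] with t ht
    set a : EuclideanSpace ℝ (Fin n) := t • EuclideanSpace.single i (1:ℝ) with hadef
    have hE : energy m a = Real.sqrt (t ^ 2 + m ^ 2) := energy_eq_sqrt t i
    have hEm : m < energy m a := by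
      rw [hE]
      exact (Real.lt_sqrt hm.le).2 (by nlinarith)
    have htE : t ≤ energy m a := by
      have h1 : ‖a‖ ≤ energy m a := norm_le_energy hm a
      have h2 : ‖a‖ = |t| := by
        rw [hadef, norm_smul, EuclideanSpace.norm_single, norm_one, mul_one, Real.norm_eq_abs]
      calc t ≤ |t| := le_abs_self t
        _ ≤ energy m a := h2 ▸ h1
    have hk := key hm a hm hEm
    refine le_trans ?_ hk
    apply Real.sqrt_le_sqrt
    rw [hSdef]
    have hnum : t - m ≤ energy m a - m := by linarith
    gcongr
end
end

section
/- If f : ℝⁿ → ℂ is measurable and ∫ (1 + |p|^{1/2}) |f(p)| dp < ∞, then the convolution operator K_f φ = f ∗ φ is bounded on L²_r(ℝⁿ), with ‖K_f‖ ≤ ∫ (1 + |p|/m + |p|²/m²)^{1/4} |f(p)| dp. -/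
open MeasureTheory Filter
open scoped ENNReal NNReal

noncomputable section

/-- Convolution (w.r.t. Lebesgue measure): `(f ∗ φ)(p) = ∫ f(q) φ(p − q) dq`. -/
def convOp {n : ℕ} (f φ : EuclideanSpace ℝ (Fin n) → ℂ) (p : EuclideanSpace ℝ (Fin n)) : ℂ :=
  ∫ q, f q * φ (p - q)

namespace ConvAux

/-- The weight `C(q) = (1 + |q|/m + |q|²/m²)^{1/4}`. -/
def Cw {n : ℕ} (m : ℝ) (q : EuclideanSpace ℝ (Fin n)) : ℝ :=
  (1 + ‖q‖ / m + ‖q‖ ^ 2 / m ^ 2) ^ ((1 : ℝ) / 4)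

lemma poly_key (m a b : ℝ) (hm : 0 < m) (hb : 0 ≤ b) :
    (a + b) ^ 2 + m ^ 2 ≤ (1 + b / m + b ^ 2 / m ^ 2) * (a ^ 2 + m ^ 2) := by
  have h : (1 + b / m + b ^ 2 / m ^ 2) = (m ^ 2 + b * m + b ^ 2) / m ^ 2 := by
    field_simp
  rw [h, div_mul_eq_mul_div, le_div_iff₀ (by positivity)]
  nlinarith [mul_nonneg (mul_nonneg hb hm.le) (sq_nonneg (a - m)), sq_nonneg (a * b)]

lemma energy_pos {n : ℕ} (m : ℝ) (hm : 0 < m) (p : EuclideanSpace ℝ (Fin n)) :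
    0 < energy m p := Real.sqrt_pos.2 (by positivity)

lemma base_one_le {n : ℕ} (m : ℝ) (hm : 0 < m) (q : EuclideanSpace ℝ (Fin n)) :
    (1 : ℝ) ≤ 1 + ‖q‖ / m + ‖q‖ ^ 2 / m ^ 2 := by
  have h1 : 0 ≤ ‖q‖ / m := by positivity
  have h2 : 0 ≤ ‖q‖ ^ 2 / m ^ 2 := by positivity
  linarith

lemma one_le_Cw {n : ℕ} (m : ℝ) (hm : 0 < m) (q : EuclideanSpace ℝ (Fin n)) :
    (1 : ℝ) ≤ Cw m q :=
  Real.one_le_rpow (base_one_le m hm q) (by norm_num)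

lemma Cw_nonneg {n : ℕ} (m : ℝ) (hm : 0 < m) (q : EuclideanSpace ℝ (Fin n)) :
    (0 : ℝ) ≤ Cw m q := le_trans zero_le_one (one_le_Cw m hm q)

lemma Cw_continuous {n : ℕ} (m : ℝ) : Continuous (Cw (n := n) m) := by
  apply Continuous.rpow_const
  · exact (continuous_const.add (continuous_norm.div_const m)).add
      ((continuous_norm.pow 2).div_const (m ^ 2))
  · intro x; right; norm_num

lemma energy_continuous {n : ℕ} (m : ℝ) : Continuous (energy (n := n) m) :=
  Real.continuous_sqrt.comp ((continuous_norm.pow 2).add continuous_const)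

lemma energy_le {n : ℕ} (m : ℝ) (hm : 0 < m) (p q : EuclideanSpace ℝ (Fin n)) :
    energy m (p - q) ≤ Cw m q ^ 2 * energy m p := by
  have hbase : (0 : ℝ) ≤ 1 + ‖q‖ / m + ‖q‖ ^ 2 / m ^ 2 := le_trans zero_le_one
    (base_one_le m hm q)
  have hsq : Cw m q ^ 2 = Real.sqrt (1 + ‖q‖ / m + ‖q‖ ^ 2 / m ^ 2) := by
    rw [Cw, ← Real.rpow_natCast ((1 + ‖q‖ / m + ‖q‖ ^ 2 / m ^ 2) ^ ((1 : ℝ) / 4)) 2,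
      ← Real.rpow_mul hbase, Real.sqrt_eq_rpow]
    norm_num
  rw [hsq, energy, energy, ← Real.sqrt_mul hbase]
  apply Real.sqrt_le_sqrt
  calc ‖p - q‖ ^ 2 + m ^ 2 ≤ (‖p‖ + ‖q‖) ^ 2 + m ^ 2 := by
        have := norm_sub_le p q
        nlinarith [norm_nonneg (p - q), norm_nonneg p, norm_nonneg q]
    _ ≤ (1 + ‖q‖ / m + ‖q‖ ^ 2 / m ^ 2) * (‖p‖ ^ 2 + m ^ 2) :=
        poly_key m ‖p‖ ‖q‖ hm (norm_nonneg q)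

lemma Cw_le {n : ℕ} (m : ℝ) (hm : 0 < m) (q : EuclideanSpace ℝ (Fin n)) :
    Cw m q ≤ max 1 (1 / Real.sqrt m) * (1 + Real.sqrt ‖q‖) := by
  set b := ‖q‖ with hbdef
  have hb : 0 ≤ b := norm_nonneg q
  have hbm : 0 ≤ b / m := by positivity
  have h1 : Cw m q ≤ Real.sqrt (1 + b / m) := by
    have hle : 1 + b / m + b ^ 2 / m ^ 2 ≤ (1 + b / m) ^ 2 := by
      have h : b ^ 2 / m ^ 2 = (b / m) ^ 2 := by ring
      nlinarith
    calc Cw m q ≤ ((1 + b / m) ^ 2) ^ ((1 : ℝ) / 4) :=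
          Real.rpow_le_rpow (by positivity) hle (by norm_num)
      _ = Real.sqrt (1 + b / m) := by
          rw [← Real.rpow_natCast (1 + b / m) 2, ← Real.rpow_mul (by positivity),
            Real.sqrt_eq_rpow]
          norm_num
  have h2 : Real.sqrt (1 + b / m) ≤ 1 + Real.sqrt (b / m) := by
    have hsq : 1 + b / m ≤ (1 + Real.sqrt (b / m)) ^ 2 := by
      nlinarith [Real.sq_sqrt hbm, Real.sqrt_nonneg (b / m)]
    calc Real.sqrt (1 + b / m) ≤ Real.sqrt ((1 + Real.sqrt (b / m)) ^ 2) :=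
          Real.sqrt_le_sqrt hsq
      _ = 1 + Real.sqrt (b / m) := Real.sqrt_sq (by positivity)
  have h3 : Real.sqrt (b / m) = Real.sqrt b * (1 / Real.sqrt m) := by
    rw [Real.sqrt_div hb m]; ring
  set K := max 1 (1 / Real.sqrt m) with hK
  have hK1 : (1 : ℝ) ≤ K := le_max_left _ _
  have hK2 : 1 / Real.sqrt m ≤ K := le_max_right _ _
  have h4 : 1 + Real.sqrt (b / m) ≤ K * (1 + Real.sqrt b) := by
    rw [h3]
    have : Real.sqrt b * (1 / Real.sqrt m) ≤ Real.sqrt b * K :=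
      mul_le_mul_of_nonneg_left hK2 (Real.sqrt_nonneg b)
    nlinarith [Real.sqrt_nonneg b]
  linarith

open ENNReal in
lemma inv_le_helper {a b c : ℝ≥0∞} (hc0 : c ≠ 0) (hct : c ≠ ⊤) (h : b ≤ c * a) :
    a⁻¹ ≤ c * b⁻¹ := by
  have h2 : c⁻¹ * b ≤ a := by
    calc c⁻¹ * b ≤ c⁻¹ * (c * a) := mul_le_mul_right h c⁻¹
      _ = (c⁻¹ * c) * a := by rw [mul_assoc]
      _ = a := by rw [ENNReal.inv_mul_cancel hc0 hct, one_mul]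
  calc a⁻¹ ≤ (c⁻¹ * b)⁻¹ := ENNReal.inv_le_inv' h2
    _ = c * b⁻¹ := by
        rw [ENNReal.mul_inv (Or.inl (ENNReal.inv_ne_zero.mpr hct))
          (Or.inl (ENNReal.inv_ne_top.mpr hc0)), inv_inv]

lemma sqrt_half_sq (x : ℝ≥0∞) : (x ^ ((1 : ℝ) / 2)) ^ 2 = x := by
  rw [← ENNReal.rpow_natCast (x ^ ((1 : ℝ) / 2)) 2, ← ENNReal.rpow_mul]
  norm_num

lemma mul_self_rpow_half (x : ℝ≥0∞) : (x * x) ^ ((1 : ℝ) / 2) = x := by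
  rw [← sq, ← ENNReal.rpow_natCast x 2, ← ENNReal.rpow_mul]
  norm_num

end ConvAux

/-- if `f` is measurable with `∫ (1 + |p|^{1/2})|f(p)| dp < ∞`, then the
convolution operator `K_f : φ ↦ f ∗ φ` is bounded on `L²_r(ℝⁿ)`, with
`‖K_f‖ ≤ ∫ (1 + |p|/m + |p|²/m²)^{1/4} |f(p)| dp`. -/
theorem conv_bounded {n : ℕ} (m : ℝ) (hm : 0 < m) (f : EuclideanSpace ℝ (Fin n) → ℂ)
    (hf : Measurable f)
    (hint : Integrable (fun p => (1 + Real.sqrt ‖p‖) * ‖f p‖)) :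
    ∀ φ, MemL2r m φ → MemL2r m (convOp f φ) ∧
      rnorm m (convOp f φ) ≤
        (∫ p, (1 + ‖p‖ / m + ‖p‖ ^ 2 / m ^ 2) ^ ((1 : ℝ) / 4) * ‖f p‖) * rnorm m φ := by
  intro φ hφ
  obtain ⟨hφm, hφi⟩ := hφ
  classical
  -- a measurable representative of φ
  set φ' : EuclideanSpace ℝ (Fin n) → ℂ := hφm.mk φ with hφ'def
  have hφ'sm : StronglyMeasurable φ' := hφm.stronglyMeasurable_mk
  have hφ'meas : Measurable φ' := hφ'sm.measurable
  have hφae : φ =ᵐ[volume] φ' := hφm.ae_eq_mk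
  have htrans : ∀ p : EuclideanSpace ℝ (Fin n),
      (fun q => φ (p - q)) =ᵐ[(volume : Measure (EuclideanSpace ℝ (Fin n)))]
        fun q => φ' (p - q) := fun p =>
    (Measure.measurePreserving_sub_left volume p).quasiMeasurePreserving.ae_eq_comp hφae
  have h_conv_eq : convOp f φ = convOp f φ' := by
    funext p
    simp only [convOp]
    refine integral_congr_ae ((htrans p).mono fun q hq => ?_)
    simp only at hq
    simp only [hq]
  have hφ'i : Integrable (fun p => ‖φ' p‖ ^ 2 / energy m p) :=
    hφi.congr (hφae.mono fun p hp => by simp only [hp])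
  have h_int_eq : ∫ p, ‖φ p‖ ^ 2 / energy m p = ∫ p, ‖φ' p‖ ^ 2 / energy m p :=
    integral_congr_ae (hφae.mono fun p hp => by simp only [hp])
  -- ENNReal-valued players
  set F : EuclideanSpace ℝ (Fin n) → ℝ≥0∞ := fun q => (‖f q‖₊ : ℝ≥0∞) with hF
  set Φ : EuclideanSpace ℝ (Fin n) → ℝ≥0∞ := fun p => (‖φ' p‖₊ : ℝ≥0∞) with hΦ
  set Ce : EuclideanSpace ℝ (Fin n) → ℝ≥0∞ := fun q => ENNReal.ofReal (ConvAux.Cw m q) with hCe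
  set Ee : EuclideanSpace ℝ (Fin n) → ℝ≥0∞ := fun p => ENNReal.ofReal (energy m p) with hEe
  have hCe0 : ∀ q, Ce q ≠ 0 := fun q => by
    simp only [hCe, ne_eq, ENNReal.ofReal_eq_zero, not_le]
    linarith [ConvAux.one_le_Cw m hm q]
  have hCet : ∀ q, Ce q ≠ ⊤ := fun q => ENNReal.ofReal_ne_top
  have hEe0 : ∀ p, Ee p ≠ 0 := fun p => by
    simp only [hEe, ne_eq, ENNReal.ofReal_eq_zero, not_le]
    exact ConvAux.energy_pos m hm p
  have hEet : ∀ p, Ee p ≠ ⊤ := fun p => ENNReal.ofReal_ne_top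
  -- measurability
  have hFm : Measurable F := hf.enorm
  have hΦm : Measurable Φ := hφ'meas.enorm
  have hCem : Measurable Ce :=
    ENNReal.measurable_ofReal.comp (ConvAux.Cw_continuous m).measurable
  have hEem : Measurable Ee :=
    ENNReal.measurable_ofReal.comp (ConvAux.energy_continuous m).measurable
  set I1 : ℝ≥0∞ := ∫⁻ q, Ce q * F q with hI1
  set B : ℝ≥0∞ := ∫⁻ p, Φ p ^ 2 * (Ee p)⁻¹ with hB
  -- finiteness of I1 and its value
  have hCwf_int : Integrable (fun q => ConvAux.Cw m q * ‖f q‖) := by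
    refine (hint.const_mul (max 1 (1 / Real.sqrt m))).mono'
      (((ConvAux.Cw_continuous m).aestronglyMeasurable).mul
        (hf.norm.aestronglyMeasurable)) ?_
    filter_upwards with q
    rw [Real.norm_of_nonneg (mul_nonneg (ConvAux.Cw_nonneg m hm q) (norm_nonneg _))]
    calc ConvAux.Cw m q * ‖f q‖
        ≤ (max 1 (1 / Real.sqrt m) * (1 + Real.sqrt ‖q‖)) * ‖f q‖ :=
          mul_le_mul_of_nonneg_right (ConvAux.Cw_le m hm q) (norm_nonneg _)
      _ = max 1 (1 / Real.sqrt m) * ((1 + Real.sqrt ‖q‖) * ‖f q‖) := by ring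
  have hI1_eq : I1 = ∫⁻ q, ENNReal.ofReal (ConvAux.Cw m q * ‖f q‖) := by
    refine lintegral_congr fun q => ?_
    rw [ENNReal.ofReal_mul (ConvAux.Cw_nonneg m hm q), ofReal_norm, enorm_eq_nnnorm]
  have hI1top : I1 ≠ ⊤ := by rw [hI1_eq]; exact hCwf_int.lintegral_lt_top.ne
  have hA_eq : (∫ p, (1 + ‖p‖ / m + ‖p‖ ^ 2 / m ^ 2) ^ ((1 : ℝ) / 4) * ‖f p‖) = I1.toReal := by
    rw [hI1_eq]
    exact integral_eq_lintegral_of_nonneg_ae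
      (Eventually.of_forall fun q =>
        mul_nonneg (ConvAux.Cw_nonneg m hm q) (norm_nonneg _))
      (((ConvAux.Cw_continuous m).aestronglyMeasurable).mul (hf.norm.aestronglyMeasurable))
  -- B and its value
  have hofReal_sq_div : ∀ (ψ : EuclideanSpace ℝ (Fin n) → ℂ) (p),
      ENNReal.ofReal (‖ψ p‖ ^ 2 / energy m p)
        = (‖ψ p‖₊ : ℝ≥0∞) ^ 2 * (ENNReal.ofReal (energy m p))⁻¹ := fun ψ p => by
    rw [ENNReal.ofReal_div_of_pos (ConvAux.energy_pos m hm p),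
      ENNReal.ofReal_pow (norm_nonneg _), ofReal_norm, enorm_eq_nnnorm, div_eq_mul_inv]
  have hB_eq : B = ∫⁻ p, ENNReal.ofReal (‖φ' p‖ ^ 2 / energy m p) :=
    lintegral_congr fun p => (hofReal_sq_div φ' p).symm
  have hBtop : B ≠ ⊤ := by rw [hB_eq]; exact hφ'i.lintegral_lt_top.ne
  have hsqdiv_meas : ∀ ψ : EuclideanSpace ℝ (Fin n) → ℂ, Measurable ψ →
      AEStronglyMeasurable (fun p => ‖ψ p‖ ^ 2 / energy m p) volume := fun ψ hψ =>
    (((hψ.norm.pow_const 2).div (ConvAux.energy_continuous m).measurable)).aestronglyMeasurable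
  have hB_toReal : B.toReal = ∫ p, ‖φ' p‖ ^ 2 / energy m p := by
    rw [hB_eq, ← integral_eq_lintegral_of_nonneg_ae
      (Eventually.of_forall fun p =>
        div_nonneg (sq_nonneg _) (ConvAux.energy_pos m hm p).le)
      (hsqdiv_meas φ' hφ'meas)]
  -- Step 1: pointwise bound on the convolution
  have S1 : ∀ p, (‖convOp f φ' p‖₊ : ℝ≥0∞) ≤ ∫⁻ q, F q * Φ (p - q) := by
    intro p
    calc (‖convOp f φ' p‖₊ : ℝ≥0∞) ≤ ∫⁻ q, (‖f q * φ' (p - q)‖₊ : ℝ≥0∞) :=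
          enorm_integral_le_lintegral_enorm _
      _ = ∫⁻ q, F q * Φ (p - q) := lintegral_congr fun q => by
          simp [hF, hΦ, nnnorm_mul, ENNReal.coe_mul]
  -- Step 2: Cauchy–Schwarz
  have S2 : ∀ p, ∫⁻ q, F q * Φ (p - q) ≤
      (I1 * ∫⁻ q, F q * (Ce q)⁻¹ * Φ (p - q) ^ 2) ^ ((1 : ℝ) / 2) := by
    intro p
    have hconj : Real.HolderConjugate 2 2 := Real.HolderConjugate.two_two
    have hum : AEMeasurable (fun q => (Ce q * F q) ^ ((1 : ℝ) / 2)) volume :=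
      ((hCem.mul hFm).pow_const _).aemeasurable
    have hvm : AEMeasurable
        (fun q => ((F q * (Ce q)⁻¹) ^ ((1 : ℝ) / 2)) * Φ (p - q)) volume := by
      refine Measurable.aemeasurable ?_
      exact ((hFm.mul hCem.inv).pow_const _).mul
        (hΦm.comp (measurable_const.sub measurable_id))
    have hH := ENNReal.lintegral_mul_le_Lp_mul_Lq volume hconj hum hvm
    have hmulpt : ∀ q, ((Ce q * F q) ^ ((1 : ℝ) / 2)) *
        (((F q * (Ce q)⁻¹) ^ ((1 : ℝ) / 2)) * Φ (p - q)) = F q * Φ (p - q) := by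
      intro q
      rw [← mul_assoc, ← ENNReal.mul_rpow_of_nonneg _ _ (by norm_num : (0:ℝ) ≤ 1/2)]
      have : Ce q * F q * (F q * (Ce q)⁻¹) = F q * F q := by
        calc Ce q * F q * (F q * (Ce q)⁻¹) = (Ce q * (Ce q)⁻¹) * (F q * F q) := by ring
          _ = F q * F q := by rw [ENNReal.mul_inv_cancel (hCe0 q) (hCet q), one_mul]
      rw [this, ConvAux.mul_self_rpow_half]
    have hLHS : ∫⁻ q, ((fun q => (Ce q * F q) ^ ((1 : ℝ) / 2)) *
        fun q => ((F q * (Ce q)⁻¹) ^ ((1 : ℝ) / 2)) * Φ (p - q)) q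
        = ∫⁻ q, F q * Φ (p - q) :=
      lintegral_congr fun q => by simpa using hmulpt q
    have hu2 : ∫⁻ q, ((Ce q * F q) ^ ((1 : ℝ) / 2)) ^ (2:ℝ) = I1 := by
      refine lintegral_congr fun q => ?_
      rw [← ENNReal.rpow_mul]
      norm_num
    have hv2 : ∫⁻ q, (((F q * (Ce q)⁻¹) ^ ((1 : ℝ) / 2)) * Φ (p - q)) ^ (2:ℝ)
        = ∫⁻ q, F q * (Ce q)⁻¹ * Φ (p - q) ^ 2 := by
      refine lintegral_congr fun q => ?_
      rw [ENNReal.mul_rpow_of_nonneg _ _ (by norm_num : (0:ℝ) ≤ 2), ← ENNReal.rpow_mul,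
        ← ENNReal.rpow_natCast (Φ (p - q)) 2]
      norm_num
    rw [hLHS, hu2, hv2] at hH
    calc ∫⁻ q, F q * Φ (p - q)
        ≤ I1 ^ ((1:ℝ)/2) * (∫⁻ q, F q * (Ce q)⁻¹ * Φ (p - q) ^ 2) ^ ((1:ℝ)/2) := hH
      _ = (I1 * ∫⁻ q, F q * (Ce q)⁻¹ * Φ (p - q) ^ 2) ^ ((1 : ℝ) / 2) :=
          (ENNReal.mul_rpow_of_nonneg _ _ (by norm_num : (0:ℝ) ≤ 1/2)).symm
  -- Step 3: pointwise weight transfer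
  have hEineq : ∀ p q : EuclideanSpace ℝ (Fin n), (Ee p)⁻¹ ≤ Ce q ^ 2 * (Ee (p - q))⁻¹ := by
    intro p q
    refine ConvAux.inv_le_helper (pow_ne_zero 2 (hCe0 q))
      (ENNReal.pow_ne_top (hCet q)) ?_
    have h := ConvAux.energy_le m hm p q
    calc Ee (p - q) = ENNReal.ofReal (energy m (p - q)) := rfl
      _ ≤ ENNReal.ofReal (ConvAux.Cw m q ^ 2 * energy m p) := ENNReal.ofReal_le_ofReal h
      _ = Ce q ^ 2 * Ee p := by
          rw [ENNReal.ofReal_mul (sq_nonneg _), ENNReal.ofReal_pow (ConvAux.Cw_nonneg m hm q)]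
  have S3 : ∀ p q : EuclideanSpace ℝ (Fin n),
      F q * (Ce q)⁻¹ * Φ (p - q) ^ 2 * (Ee p)⁻¹
        ≤ Ce q * F q * (Φ (p - q) ^ 2 * (Ee (p - q))⁻¹) := by
    intro p q
    calc F q * (Ce q)⁻¹ * Φ (p - q) ^ 2 * (Ee p)⁻¹
        ≤ F q * (Ce q)⁻¹ * Φ (p - q) ^ 2 * (Ce q ^ 2 * (Ee (p - q))⁻¹) :=
          mul_le_mul_right (hEineq p q) _
      _ = (Ce q * (Ce q)⁻¹) * (Ce q * F q * (Φ (p - q) ^ 2 * (Ee (p - q))⁻¹)) := by ring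
      _ = Ce q * F q * (Φ (p - q) ^ 2 * (Ee (p - q))⁻¹) := by
          rw [ENNReal.mul_inv_cancel (hCe0 q) (hCet q), one_mul]
  -- Step 4: Tonelli and translation invariance
  have hprodmeas : Measurable (fun z : EuclideanSpace ℝ (Fin n) × EuclideanSpace ℝ (Fin n) =>
      Ce z.2 * F z.2 * (Φ (z.1 - z.2) ^ 2 * (Ee (z.1 - z.2))⁻¹)) := by
    have hsub : Measurable (fun z : EuclideanSpace ℝ (Fin n) × EuclideanSpace ℝ (Fin n) =>
        z.1 - z.2) := measurable_fst.sub measurable_snd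
    exact ((hCem.comp measurable_snd).mul (hFm.comp measurable_snd)).mul
      (((hΦm.comp hsub).pow_const 2).mul ((hEem.comp hsub).inv))
  have S4 : ∫⁻ p, (∫⁻ q, F q * (Ce q)⁻¹ * Φ (p - q) ^ 2) * (Ee p)⁻¹ ≤ I1 * B := by
    have hinner_meas : ∀ p : EuclideanSpace ℝ (Fin n),
        Measurable (fun q => F q * (Ce q)⁻¹ * Φ (p - q) ^ 2) := fun p =>
      (hFm.mul hCem.inv).mul
        ((hΦm.comp (measurable_const.sub measurable_id)).pow_const 2)
    calc ∫⁻ p, (∫⁻ q, F q * (Ce q)⁻¹ * Φ (p - q) ^ 2) * (Ee p)⁻¹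
        = ∫⁻ p, ∫⁻ q, F q * (Ce q)⁻¹ * Φ (p - q) ^ 2 * (Ee p)⁻¹ :=
          lintegral_congr fun p => (lintegral_mul_const'' _ (hinner_meas p).aemeasurable).symm
      _ ≤ ∫⁻ p, ∫⁻ q, Ce q * F q * (Φ (p - q) ^ 2 * (Ee (p - q))⁻¹) :=
          lintegral_mono fun p => lintegral_mono fun q => S3 p q
      _ = ∫⁻ q, ∫⁻ p, Ce q * F q * (Φ (p - q) ^ 2 * (Ee (p - q))⁻¹) :=
          lintegral_lintegral_swap hprodmeas.aemeasurable
      _ = ∫⁻ q, Ce q * F q * ∫⁻ p, Φ (p - q) ^ 2 * (Ee (p - q))⁻¹ :=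
          lintegral_congr fun q => lintegral_const_mul'' _
            (((hΦm.comp (measurable_id.sub measurable_const)).pow_const 2).mul
              ((hEem.comp (measurable_id.sub measurable_const)).inv)).aemeasurable
      _ = ∫⁻ q, Ce q * F q * B := by
          refine lintegral_congr fun q => ?_
          rw [lintegral_sub_right_eq_self (fun x => Φ x ^ 2 * (Ee x)⁻¹) q]
      _ = I1 * B := by rw [lintegral_mul_const'' (f := fun q => Ce q * F q) B (hCem.mul hFm).aemeasurable]
  -- main lintegral bound
  have hI2meas : Measurable (fun p => ∫⁻ q, F q * (Ce q)⁻¹ * Φ (p - q) ^ 2) := by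
    have : Measurable (fun z : EuclideanSpace ℝ (Fin n) × EuclideanSpace ℝ (Fin n) =>
        F z.2 * (Ce z.2)⁻¹ * Φ (z.1 - z.2) ^ 2) :=
      ((hFm.comp measurable_snd).mul ((hCem.comp measurable_snd).inv)).mul
        ((hΦm.comp (measurable_fst.sub measurable_snd)).pow_const 2)
    exact this.lintegral_prod_right'
  have hLK : (∫⁻ p, (‖convOp f φ' p‖₊ : ℝ≥0∞) ^ 2 * (Ee p)⁻¹) ≤ I1 ^ 2 * B := by
    calc (∫⁻ p, (‖convOp f φ' p‖₊ : ℝ≥0∞) ^ 2 * (Ee p)⁻¹)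
        ≤ ∫⁻ p, (I1 * ∫⁻ q, F q * (Ce q)⁻¹ * Φ (p - q) ^ 2) * (Ee p)⁻¹ := by
          refine lintegral_mono fun p => mul_le_mul_left ?_ _
          have h12 := (S1 p).trans (S2 p)
          calc (‖convOp f φ' p‖₊ : ℝ≥0∞) ^ 2
              ≤ ((I1 * ∫⁻ q, F q * (Ce q)⁻¹ * Φ (p - q) ^ 2) ^ ((1:ℝ)/2)) ^ 2 :=
                pow_le_pow_left₀ zero_le h12 2
            _ = I1 * ∫⁻ q, F q * (Ce q)⁻¹ * Φ (p - q) ^ 2 := ConvAux.sqrt_half_sq _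
      _ = I1 * ∫⁻ p, (∫⁻ q, F q * (Ce q)⁻¹ * Φ (p - q) ^ 2) * (Ee p)⁻¹ := by
          rw [← lintegral_const_mul'' (f := fun p => (∫⁻ q, F q * (Ce q)⁻¹ * Φ (p - q) ^ 2) * (Ee p)⁻¹) I1 (hI2meas.mul hEem.inv).aemeasurable]
          exact lintegral_congr fun p => by ring
      _ ≤ I1 * (I1 * B) := mul_le_mul_right S4 I1
      _ = I1 ^ 2 * B := by ring
  -- measurability of the convolution
  have hKsm : StronglyMeasurable (convOp f φ') := by
    have h : StronglyMeasurable
        (fun z : EuclideanSpace ℝ (Fin n) × EuclideanSpace ℝ (Fin n) =>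
          f z.2 * φ' (z.1 - z.2)) :=
      ((hf.comp measurable_snd).mul
        (hφ'meas.comp (measurable_fst.sub measurable_snd))).stronglyMeasurable
    exact h.integral_prod_right'
  have hKm : AEStronglyMeasurable (convOp f φ) volume := by
    rw [h_conv_eq]; exact hKsm.aestronglyMeasurable
  -- the lintegral of the conv norm
  have hLK_eq : (∫⁻ p, ENNReal.ofReal (‖convOp f φ' p‖ ^ 2 / energy m p))
      = ∫⁻ p, (‖convOp f φ' p‖₊ : ℝ≥0∞) ^ 2 * (Ee p)⁻¹ :=
    lintegral_congr fun p => hofReal_sq_div (convOp f φ') p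
  have hKi : Integrable (fun p => ‖convOp f φ p‖ ^ 2 / energy m p) := by
    rw [h_conv_eq]
    refine ⟨hsqdiv_meas _ hKsm.measurable, ?_⟩
    rw [hasFiniteIntegral_iff_norm]
    calc (∫⁻ p, ENNReal.ofReal ‖‖convOp f φ' p‖ ^ 2 / energy m p‖)
        = ∫⁻ p, (‖convOp f φ' p‖₊ : ℝ≥0∞) ^ 2 * (Ee p)⁻¹ := by
          rw [← hLK_eq]
          refine lintegral_congr fun p => ?_
          rw [Real.norm_of_nonneg (div_nonneg (sq_nonneg _) (ConvAux.energy_pos m hm p).le)]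
      _ ≤ I1 ^ 2 * B := hLK
      _ < ⊤ := ENNReal.mul_lt_top (ENNReal.pow_lt_top hI1top.lt_top) hBtop.lt_top
  refine ⟨⟨hKm, hKi⟩, ?_⟩
  -- the norm inequality
  have hA_nonneg : (0:ℝ) ≤ ∫ p, (1 + ‖p‖ / m + ‖p‖ ^ 2 / m ^ 2) ^ ((1 : ℝ) / 4) * ‖f p‖ := by
    rw [hA_eq]; exact ENNReal.toReal_nonneg
  have hint_conv : ∫ p, ‖convOp f φ p‖ ^ 2 / energy m p
      = (∫⁻ p, (‖convOp f φ' p‖₊ : ℝ≥0∞) ^ 2 * (Ee p)⁻¹).toReal := by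
    rw [h_conv_eq, ← hLK_eq]
    exact integral_eq_lintegral_of_nonneg_ae
      (Eventually.of_forall fun p =>
        div_nonneg (sq_nonneg _) (ConvAux.energy_pos m hm p).le)
      (hsqdiv_meas _ hKsm.measurable)
  rw [rnorm, rnorm, hint_conv, h_int_eq, ← hB_toReal]
  have hstep : (∫⁻ p, (‖convOp f φ' p‖₊ : ℝ≥0∞) ^ 2 * (Ee p)⁻¹).toReal
      ≤ (I1 ^ 2 * B).toReal := by
    refine ENNReal.toReal_mono ?_ hLK
    exact (ENNReal.mul_lt_top (ENNReal.pow_lt_top hI1top.lt_top) hBtop.lt_top).ne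
  calc Real.sqrt (∫⁻ p, (‖convOp f φ' p‖₊ : ℝ≥0∞) ^ 2 * (Ee p)⁻¹).toReal
      ≤ Real.sqrt ((I1 ^ 2 * B).toReal) := Real.sqrt_le_sqrt hstep
    _ = Real.sqrt (I1.toReal ^ 2 * B.toReal) := by
        rw [ENNReal.toReal_mul, ENNReal.toReal_pow]
    _ = I1.toReal * Real.sqrt B.toReal := by
        rw [Real.sqrt_mul (sq_nonneg _), Real.sqrt_sq ENNReal.toReal_nonneg]
    _ = (∫ p, (1 + ‖p‖ / m + ‖p‖ ^ 2 / m ^ 2) ^ ((1 : ℝ) / 4) * ‖f p‖) * Real.sqrt B.toReal := by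
        rw [hA_eq]
end
end

section
/- In the case n = 1 with weight w(p) = 1/(1 + p²) instead of 1/E(p), the constant function φ(p) ≡ 1 belongs to L²(ℝ, w dp) and lies in H_S ∩ H_T for S = (0,1) and T = (−1,0); in particular disjoint sets can fail to have trivial intersection of spectral subspaces for more rapidly decreasing weights. -/
open MeasureTheory FourierTransform

noncomputable section

/-- The weighted `L²` norm `(∫ |φ(p)|² w(p) dp)^{1/2}` on `ℝ`. -/
def wnorm (w : ℝ → ℝ) (φ : ℝ → ℂ) : ℝ :=
  Real.sqrt (∫ p, ‖φ p‖ ^ 2 * w p)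

/-- Membership in the weighted space `L²(ℝ, w dp)`. -/
def MemL2w (w : ℝ → ℝ) (φ : ℝ → ℂ) : Prop :=
  AEStronglyMeasurable φ volume ∧ Integrable (fun p => ‖φ p‖ ^ 2 * w p)

/-- `φ ∈ H_S` for the weighted space: `φ` is a limit, in the `w`-weighted `L²` norm, of
Fourier transforms of square-integrable (and integrable, a dense subclass with the same
closure) functions supported in `S`. -/
def MemHSw (w : ℝ → ℝ) (S : Set ℝ) (φ : ℝ → ℂ) : Prop :=
  MemL2w w φ ∧
    ∃ ψ : ℕ → ℝ → ℂ,
      (∀ k, Integrable (ψ k) ∧ MemLp (ψ k) 2 volume ∧ ∀ᵐ p, p ∉ S → ψ k p = 0) ∧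
      Filter.Tendsto (fun k => wnorm w (fun p => 𝓕 (ψ k) p - φ p)) Filter.atTop (nhds 0)

/-! The normalized indicators `(b - a)⁻¹ 𝟙_(a,b)` of intervals shrinking to `0` have Fourier
transforms bounded by `1` and, since `‖𝐞 θ - 1‖ ≤ 2π|θ|`, converging pointwise to `1`. As the
weight `1/(1 + p²)` is integrable, dominated convergence turns this into convergence in
`L²(ℝ, w dp)`. Both `(0,1)` and `(-1,0)` contain such intervals, because `0` lies on the boundary
of each. -/

open Filter Real Set Topology
open scoped ENNReal

theorem norm_fourierChar_sub_one_le (θ : ℝ) : ‖(𝐞 θ : ℂ) - 1‖ ≤ 2 * π * |θ| := by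
  rw [Real.fourierChar_apply]
  have h := Real.norm_exp_I_mul_ofReal_sub_one_le (x := 2 * π * θ)
  rwa [Real.norm_eq_abs, abs_mul, abs_of_pos two_pi_pos, mul_comm Complex.I] at h

theorem norm_fourier_sub_integral_le {ψ : ℝ → ℂ} (hψ : Integrable ψ) {r : ℝ}
    (hr : ∀ v, r < |v| → ψ v = 0) (p : ℝ) :
    ‖𝓕 ψ p - ∫ v, ψ v‖ ≤ 2 * π * r * |p| * ∫ v, ‖ψ v‖ := by
  have hint : Integrable fun v => 𝐞 (-(v * p)) • ψ v := by
    simpa [mul_comm] using (Real.fourierIntegral_convergent_iff p).2 hψ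
  have hrepr : 𝓕 ψ p - ∫ v, ψ v = ∫ v, ((𝐞 (-(v * p)) : ℂ) - 1) * ψ v := by
    rw [Real.fourier_real_eq, ← integral_sub hint hψ]
    simp only [Circle.smul_def, smul_eq_mul, sub_mul, one_mul]
  rw [hrepr, ← integral_const_mul]
  refine norm_integral_le_of_norm_le (hψ.norm.const_mul _) (Eventually.of_forall fun v => ?_)
  rw [norm_mul]
  by_cases hv : r < |v|
  · simp [hr v hv]
  · gcongr
    calc ‖(𝐞 (-(v * p)) : ℂ) - 1‖ ≤ 2 * π * |-(v * p)| := norm_fourierChar_sub_one_le _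
      _ = 2 * π * (|v| * |p|) := by rw [abs_neg, abs_mul]
      _ ≤ 2 * π * (r * |p|) := by gcongr; exact not_lt.1 hv
      _ = 2 * π * r * |p| := by ring

theorem tendsto_wnorm_fourier_sub_one {w : ℝ → ℝ} (hw : Integrable w) {ψ : ℕ → ℝ → ℂ}
    (hψ : ∀ k, Integrable (ψ k)) (hL1 : ∀ k, ∫ v, ‖ψ k v‖ ≤ 1)
    (hlim : ∀ p, Tendsto (fun k => 𝓕 (ψ k) p) atTop (𝓝 1)) :
    Tendsto (fun k => wnorm w fun p => 𝓕 (ψ k) p - 1) atTop (𝓝 0) := by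
  have hle_two : ∀ k p, ‖𝓕 (ψ k) p - 1‖ ≤ 2 := fun k p =>
    calc ‖𝓕 (ψ k) p - 1‖ ≤ ‖𝓕 (ψ k) p‖ + ‖(1 : ℂ)‖ := norm_sub_le _ _
      _ ≤ 1 + 1 := by
        rw [norm_one]
        gcongr
        exact (VectorFourier.norm_fourierIntegral_le_integral_norm _ _ _ _ _).trans (hL1 k)
      _ = 2 := one_add_one_eq_two
  have hweighted :
      Tendsto (fun k => ∫ p, ‖𝓕 (ψ k) p - 1‖ ^ 2 * w p) atTop (𝓝 (∫ _ : ℝ, (0 : ℝ))) := by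
    refine tendsto_integral_of_dominated_convergence (fun p => 4 * |w p|) (fun k => ?_)
      (hw.abs.const_mul 4) (fun k => Eventually.of_forall fun p => ?_)
      (Eventually.of_forall fun p => ?_)
    · have hcont : Continuous (𝓕 (ψ k)) :=
        VectorFourier.fourierIntegral_continuous Real.continuous_fourierChar continuous_inner
          (hψ k)
      exact ((hcont.sub continuous_const).norm.pow 2).aestronglyMeasurable.mul
        hw.aestronglyMeasurable
    · rw [norm_mul, norm_pow, norm_norm, Real.norm_eq_abs]
      gcongr
      nlinarith [hle_two k p, norm_nonneg (𝓕 (ψ k) p - 1)]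
    · simpa using (((hlim p).sub_const 1).norm.pow 2).mul_const (w p)
  rw [integral_zero] at hweighted
  simpa [wnorm, Function.comp_def] using (continuous_sqrt.tendsto 0).comp hweighted

def uniformDensity (a b : ℝ) : ℝ → ℂ :=
  (Ioo a b).indicator fun _ => ((b - a : ℝ) : ℂ)⁻¹

theorem integrable_uniformDensity (a b : ℝ) : Integrable (uniformDensity a b) :=
  (integrable_indicator_iff measurableSet_Ioo).2 (integrableOn_const measure_Ioo_lt_top.ne)

theorem memLp_uniformDensity (a b : ℝ) (q : ℝ≥0∞) : MemLp (uniformDensity a b) q :=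
  memLp_indicator_const q measurableSet_Ioo _ (Or.inr measure_Ioo_lt_top.ne)

theorem integral_uniformDensity {a b : ℝ} (hab : a < b) : ∫ v, uniformDensity a b v = 1 := by
  rw [uniformDensity, integral_indicator_const _ measurableSet_Ioo,
    Real.volume_real_Ioo_of_le hab.le, Complex.real_smul]
  exact mul_inv_cancel₀ (Complex.ofReal_ne_zero.2 (sub_ne_zero.2 hab.ne'))

theorem integral_norm_uniformDensity {a b : ℝ} (hab : a < b) :
    ∫ v, ‖uniformDensity a b v‖ = 1 := by
  have hnorm : (fun v => ‖uniformDensity a b v‖) = (Ioo a b).indicator fun _ => (b - a)⁻¹ := by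
    ext v
    by_cases hv : v ∈ Ioo a b
    · simp only [uniformDensity, indicator_of_mem hv, norm_inv, Complex.norm_real,
        Real.norm_eq_abs, abs_of_pos (sub_pos.2 hab)]
    · simp [uniformDensity, hv]
  rw [hnorm, integral_indicator_const _ measurableSet_Ioo, Real.volume_real_Ioo_of_le hab.le,
    smul_eq_mul, mul_inv_cancel₀ (sub_ne_zero.2 hab.ne')]

theorem norm_fourier_uniformDensity_sub_one_le {a b : ℝ} (hab : a < b) (p : ℝ) :
    ‖𝓕 (uniformDensity a b) p - 1‖ ≤ 2 * π * max |a| |b| * |p| := by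
  have hsupp : ∀ v, max |a| |b| < |v| → uniformDensity a b v = 0 := by
    intro v hv
    refine indicator_of_notMem (fun hmem => hv.not_ge ?_) _
    exact abs_le.2 ⟨by linarith [neg_abs_le a, le_max_left |a| |b|, hmem.1],
      by linarith [le_abs_self b, le_max_right |a| |b|, hmem.2]⟩
  simpa [integral_uniformDensity hab, integral_norm_uniformDensity hab] using
    norm_fourier_sub_integral_le (integrable_uniformDensity a b) hsupp p

theorem tendsto_fourier_uniformDensity {a b : ℕ → ℝ} (hab : ∀ k, a k < b k)
    (ha : Tendsto a atTop (𝓝 0)) (hb : Tendsto b atTop (𝓝 0)) (p : ℝ) :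
    Tendsto (fun k => 𝓕 (uniformDensity (a k) (b k)) p) atTop (𝓝 1) := by
  rw [tendsto_iff_norm_sub_tendsto_zero]
  have hbound : Tendsto (fun k => 2 * π * max |a k| |b k| * |p|) atTop (𝓝 0) := by
    simpa using ((ha.abs.max hb.abs).const_mul (2 * π)).mul_const |p|
  exact squeeze_zero (fun _ => norm_nonneg _)
    (fun k => norm_fourier_uniformDensity_sub_one_le (hab k) p) hbound

theorem memL2w_const {w : ℝ → ℝ} (hw : Integrable w) (c : ℂ) : MemL2w w fun _ => c :=
  ⟨aestronglyMeasurable_const, hw.const_mul _⟩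

theorem memHSw_one_of_tendsto {w : ℝ → ℝ} (hw : Integrable w) {S : Set ℝ} {a b : ℕ → ℝ}
    (hab : ∀ k, a k < b k) (ha : Tendsto a atTop (𝓝 0)) (hb : Tendsto b atTop (𝓝 0))
    (hS : ∀ k, Ioo (a k) (b k) ⊆ S) :
    MemHSw w S fun _ => 1 := by
  refine ⟨memL2w_const hw 1, fun k => uniformDensity (a k) (b k), fun k =>
    ⟨integrable_uniformDensity _ _, memLp_uniformDensity _ _ 2, Eventually.of_forall fun v hv =>
      indicator_of_notMem (fun hmem => hv (hS k hmem)) _⟩, ?_⟩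
  exact tendsto_wnorm_fourier_sub_one hw (fun k => integrable_uniformDensity _ _)
    (fun k => (integral_norm_uniformDensity (hab k)).le) (tendsto_fourier_uniformDensity hab ha hb)

/-- with the more rapidly decreasing weight `w(p) = 1/(1 + p²)` on `ℝ`, the
constant function `1` belongs to `L²(ℝ, w dp)` and lies in `H_S ∩ H_T` for the disjoint
sets `S = (0,1)`, `T = (−1,0)`: spectral subspaces of disjoint sets can intersect
nontrivially for such weights. -/
theorem const_one_in_HS_and_HT :
    MemL2w (fun p => 1 / (1 + p ^ 2)) (fun _ => (1 : ℂ)) ∧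
    MemHSw (fun p => 1 / (1 + p ^ 2)) (Set.Ioo 0 1) (fun _ => (1 : ℂ)) ∧
    MemHSw (fun p => 1 / (1 + p ^ 2)) (Set.Ioo (-1) 0) (fun _ => (1 : ℂ)) := by
  have hw : Integrable fun p : ℝ => 1 / (1 + p ^ 2) := by
    simpa only [one_div] using integrable_inv_one_add_sq
  have hε := tendsto_one_div_add_atTop_nhds_zero_nat (𝕜 := ℝ)
  have hε_pos (k : ℕ) : (0 : ℝ) < 1 / (k + 1) := Nat.one_div_pos_of_nat
  have hε_le (k : ℕ) : 1 / ((k : ℝ) + 1) ≤ 1 :=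
    div_le_one_of_le₀ (le_add_of_nonneg_left k.cast_nonneg) (by positivity)
  refine ⟨memL2w_const hw 1, ?_, ?_⟩
  · exact memHSw_one_of_tendsto hw hε_pos tendsto_const_nhds hε
      fun k => Ioo_subset_Ioo_right (hε_le k)
  · exact memHSw_one_of_tendsto hw (fun k => neg_lt_zero.2 (hε_pos k))
      (by simpa using hε.neg) tendsto_const_nhds fun k => Ioo_subset_Ioo_left (neg_le_neg (hε_le k))
end
end

section
/- Every operator A on L²_r(ℝⁿ) that commutes with all translations T_a maps L²(ℝⁿ) ⊂ L²_r(ℝⁿ) into L²(ℝⁿ), and its restriction to L²(ℝⁿ) is bounded with operator norm at most the norm of A on L²_r(ℝⁿ). -/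
open MeasureTheory Filter

noncomputable section

open scoped ENNReal NNReal Topology in
section
open Metric

namespace Aux13

variable {n : ℕ}

local notation "V" => EuclideanSpace ℝ (Fin n)

lemma energy_nonneg (m : ℝ) (p : V) : 0 ≤ energy m p := Real.sqrt_nonneg _

lemma energy_pos {m : ℝ} (hm : 0 < m) (p : V) : 0 < energy m p :=
  Real.sqrt_pos.2 (by positivity)

lemma norm_le_energy (m : ℝ) (p : V) : ‖p‖ ≤ energy m p := by
  have h : Real.sqrt (‖p‖ ^ 2) ≤ energy m p :=
    Real.sqrt_le_sqrt (by nlinarith [sq_nonneg m])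
  simpa [Real.sqrt_sq (norm_nonneg p)] using h

lemma m_le_energy {m : ℝ} (hm : 0 ≤ m) (p : V) : m ≤ energy m p := by
  have h : Real.sqrt (m ^ 2) ≤ energy m p :=
    Real.sqrt_le_sqrt (by nlinarith [sq_nonneg ‖p‖])
  simpa [Real.sqrt_sq hm] using h

lemma energy_le {m : ℝ} (hm : 0 ≤ m) (p : V) : energy m p ≤ ‖p‖ + m := by
  have h : (‖p‖ : ℝ) ^ 2 + m ^ 2 ≤ (‖p‖ + m) ^ 2 := by nlinarith [norm_nonneg p]
  calc energy m p ≤ Real.sqrt ((‖p‖ + m) ^ 2) := Real.sqrt_le_sqrt h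
  _ = ‖p‖ + m := Real.sqrt_sq (by positivity)

lemma continuous_energy (m : ℝ) : Continuous (fun p : V => energy m p) :=
  Real.continuous_sqrt.comp ((continuous_norm.pow 2).add continuous_const)

/-- The weight `1/E` as an `ℝ≥0∞`-valued function. -/
def en (m : ℝ) (q : V) : ℝ≥0∞ := ENNReal.ofReal (1 / energy m q)

lemma measurable_en (m : ℝ) : Measurable (fun q : V => en m q) :=
  Measurable.ennreal_ofReal (by
    simp only [one_div]; exact (continuous_energy (n := n) m).measurable.inv)

lemma en_le {m r : ℝ} (hr : 0 < r) {q : V} (h : r ≤ energy m q) :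
    en m q ≤ ENNReal.ofReal (1 / r) :=
  ENNReal.ofReal_le_ofReal (one_div_le_one_div_of_le hr h)

lemma le_en {m s : ℝ} (hm : 0 < m) {q : V} (h : energy m q ≤ s) :
    ENNReal.ofReal (1 / s) ≤ en m q :=
  ENNReal.ofReal_le_ofReal (one_div_le_one_div_of_le (energy_pos hm q) h)

lemma rnorm_nonneg (m : ℝ) (f : V → ℂ) : 0 ≤ rnorm m f := Real.sqrt_nonneg _

lemma ofReal_integrand (m : ℝ) (f : V → ℂ) (q : V) :
    ENNReal.ofReal (‖f q‖ ^ 2 / energy m q) = (‖f q‖₊ : ℝ≥0∞) ^ 2 * en m q := by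
  rw [div_eq_mul_one_div, ENNReal.ofReal_mul (by positivity),
    ENNReal.ofReal_pow (norm_nonneg _), ofReal_norm_eq_enorm]
  rfl

/-- The quadratic form of `L²_r` as a lower integral. -/
def Lr (m : ℝ) (f : V → ℂ) : ℝ≥0∞ := ∫⁻ q, (‖f q‖₊ : ℝ≥0∞) ^ 2 * en m q

lemma Lr_eq {m : ℝ} (f : V → ℂ) (hf : MemL2r m f) :
    Lr m f = ENNReal.ofReal ((rnorm m f) ^ 2) := by
  have h0 : 0 ≤ᵐ[(volume : Measure V)] fun q => ‖f q‖ ^ 2 / energy m q :=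
    Filter.Eventually.of_forall fun q => div_nonneg (by positivity) (energy_nonneg m q)
  simp only [rnorm]
  rw [Real.sq_sqrt (integral_nonneg fun q => div_nonneg (by positivity) (energy_nonneg m q)),
    ofReal_integral_eq_lintegral_ofReal hf.2 h0]
  exact lintegral_congr fun q => (ofReal_integrand m f q).symm

lemma memL2r_of_memL2 {m : ℝ} (hm : 0 < m) {f : V → ℂ}
    (hf : MemLp f 2 (volume : Measure V)) : MemL2r m f := by
  refine ⟨hf.1, ?_⟩
  have hi : Integrable (fun q : V => ‖f q‖ ^ 2) volume := by
    have h := hf.integrable_norm_rpow two_ne_zero ENNReal.ofNat_ne_top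
    simpa [ENNReal.toReal_ofNat, Real.rpow_natCast] using h
  refine (hi.mul_const m⁻¹).mono' ?_ ?_
  · refine ((hf.1.norm.mul hf.1.norm).mul
      ((continuous_energy m).inv₀ fun q => (energy_pos hm q).ne').aestronglyMeasurable).congr
      (Filter.Eventually.of_forall fun q => ?_)
    simp [pow_two, div_eq_mul_inv]
  · refine Filter.Eventually.of_forall fun q => ?_
    rw [Real.norm_of_nonneg (div_nonneg (by positivity) (energy_nonneg m q)), ← div_eq_mul_inv]
    exact div_le_div_of_nonneg_left (by positivity) hm (m_le_energy hm.le q)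

lemma memL2r_transl {m : ℝ} (hm : 0 < m) {f : V → ℂ}
    (hf : MemLp f 2 (volume : Measure V)) (a : V) : MemL2r m (transl a f) :=
  memL2r_of_memL2 hm
    (hf.comp_measurePreserving (measurePreserving_sub_right volume a))

lemma Lr_transl (m : ℝ) (f : V → ℂ) (a : V) :
    Lr m (transl a f) = ∫⁻ q, (‖f q‖₊ : ℝ≥0∞) ^ 2 * en m (q + a) := by
  calc Lr m (transl a f)
      = ∫⁻ p, (‖f (p - a)‖₊ : ℝ≥0∞) ^ 2 * en m p := rfl
    _ = ∫⁻ q, (‖f (q + a - a)‖₊ : ℝ≥0∞) ^ 2 * en m (q + a) :=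
        (lintegral_add_right_eq_self (fun p => (‖f (p - a)‖₊ : ℝ≥0∞) ^ 2 * en m p) a).symm
    _ = _ := lintegral_congr fun q => by rw [add_sub_cancel_right]

lemma key_pointwise {m : ℝ} (hm : 0 < m)
    {A : (V → ℂ) → V → ℂ} {C : ℝ} (hC : 0 ≤ C)
    (hbdd : ∀ φ, MemL2r m φ → MemL2r m (A φ) ∧ rnorm m (A φ) ≤ C * rnorm m φ)
    (hcomm : ∀ a φ, MemL2r m φ → A (transl a φ) =ᵐ[volume] transl a (A φ))
    {φ : V → ℂ} (hφ : MemLp φ 2 (volume : Measure V)) (a : V) :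
    ∫⁻ q, (‖A φ q‖₊ : ℝ≥0∞) ^ 2 * en m (q + a)
      ≤ (ENNReal.ofReal C) ^ 2 * ∫⁻ q, (‖φ q‖₊ : ℝ≥0∞) ^ 2 * en m (q + a) := by
  have hφr := memL2r_of_memL2 hm hφ
  have hφa := memL2r_transl hm hφ a
  obtain ⟨hAφa, hineq⟩ := hbdd _ hφa
  have hce := hcomm a φ hφr
  have hAr : MemL2r m (transl a (A φ)) :=
    ⟨hAφa.1.congr hce, hAφa.2.congr (hce.mono fun p hp => by simp only [hp])⟩
  have hrn : rnorm m (A (transl a φ)) = rnorm m (transl a (A φ)) := by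
    simp only [rnorm]
    congr 1
    exact integral_congr_ae (hce.mono fun p hp => by simp only [hp])
  have h2 : rnorm m (transl a (A φ)) ≤ C * rnorm m (transl a φ) := hrn ▸ hineq
  rw [← Lr_transl, ← Lr_transl, Lr_eq _ hAr, Lr_eq _ hφa]
  calc ENNReal.ofReal ((rnorm m (transl a (A φ))) ^ 2)
      ≤ ENNReal.ofReal ((C * rnorm m (transl a φ)) ^ 2) :=
        ENNReal.ofReal_le_ofReal (pow_le_pow_left₀ (rnorm_nonneg _ _) h2 2)
    _ = (ENNReal.ofReal C) ^ 2 * ENNReal.ofReal ((rnorm m (transl a φ)) ^ 2) := by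
        rw [mul_pow, ENNReal.ofReal_mul (by positivity), ENNReal.ofReal_pow hC]

/-- The weight `W_R(p) = ∫_{B(0,R)} dp'/E(p+p')`. -/
def WW (m R : ℝ) (p : V) : ℝ≥0∞ := ∫⁻ a in ball (0 : V) R, en m (p + a)

lemma WW_eq (m R : ℝ) (p : V) : WW m R p = ∫⁻ q in ball p R, en m q := by
  have hmem : ∀ a : V, a ∈ ball (0 : V) R ↔ a + p ∈ ball p R := fun a => by
    simp [mem_ball, dist_eq_norm]
  rw [WW, ← lintegral_indicator measurableSet_ball, ← lintegral_indicator measurableSet_ball]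
  calc ∫⁻ a, (ball (0 : V) R).indicator (fun a => en m (p + a)) a
      = ∫⁻ a, (ball p R).indicator (en m) (a + p) := by
        refine lintegral_congr fun a => ?_
        by_cases h : a ∈ ball (0 : V) R
        · rw [Set.indicator_of_mem h, Set.indicator_of_mem ((hmem a).1 h), add_comm]
        · rw [Set.indicator_of_notMem h, Set.indicator_of_notMem (fun hc => h ((hmem a).2 hc))]
    _ = _ := lintegral_add_right_eq_self _ p

lemma center_le (m : ℝ) {R r : ℝ} (hr : 0 < r) (x y : V)
    (hlb : ∀ q : V, q ∈ ball x R → q ∉ ball y R → r ≤ ‖q‖) :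
    ∫⁻ q in ball x R, en m q ≤ (∫⁻ q in ball y R, en m q)
      + volume (ball x R \ ball y R) * ENNReal.ofReal (1 / r) := by
  have hsub : ball x R ⊆ ball y R ∪ (ball x R \ ball y R) := fun q hq => by
    by_cases h : q ∈ ball y R
    exacts [Or.inl h, Or.inr ⟨hq, h⟩]
  calc ∫⁻ q in ball x R, en m q
      ≤ ∫⁻ q in ball y R ∪ (ball x R \ ball y R), en m q := lintegral_mono_set hsub
    _ ≤ (∫⁻ q in ball y R, en m q) + ∫⁻ q in ball x R \ ball y R, en m q :=
        lintegral_union_le _ _ _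
    _ ≤ _ := by
        refine add_le_add_right ?_ _
        calc ∫⁻ q in ball x R \ ball y R, en m q
            ≤ ∫⁻ _ in ball x R \ ball y R, ENNReal.ofReal (1 / r) :=
              setLIntegral_mono' (measurableSet_ball.diff measurableSet_ball)
                (fun q hq => en_le hr ((hlb q hq.1 hq.2).trans (norm_le_energy m q)))
          _ = _ := by rw [setLIntegral_const, mul_comm]

lemma NN_lb {m : ℝ} (hm : 0 < m) {R : ℝ} :
    ENNReal.ofReal (1 / (R + m)) * volume (ball (0 : V) R)
      ≤ ∫⁻ q in ball (0 : V) R, en m q := by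
  rw [← setLIntegral_const]
  refine setLIntegral_mono' measurableSet_ball fun q hq => ?_
  exact le_en hm ((energy_le hm.le q).trans
    (by have := mem_ball_zero_iff.1 hq; linarith))

lemma NN_ub {m : ℝ} (hm : 0 < m) (R : ℝ) :
    ∫⁻ q in ball (0 : V) R, en m q ≤ ENNReal.ofReal (1 / m) * volume (ball (0 : V) R) := by
  rw [← setLIntegral_const]
  exact setLIntegral_mono' measurableSet_ball fun q _ => en_le hm (m_le_energy hm.le q)

lemma swap_lemma (m R : ℝ) {f : V → ℂ} (hf : AEStronglyMeasurable f (volume : Measure V)) :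
    ∫⁻ a in ball (0 : V) R, ∫⁻ q, (‖f q‖₊ : ℝ≥0∞) ^ 2 * en m (q + a)
      = ∫⁻ q, (‖f q‖₊ : ℝ≥0∞) ^ 2 * WW m R q := by
  have hmeas : AEMeasurable (Function.uncurry fun (a q : V) => (‖f q‖₊ : ℝ≥0∞) ^ 2 * en m (q + a))
      (((volume : Measure V).restrict (ball (0 : V) R)).prod (volume : Measure V)) := by
    have h1 : AEMeasurable (fun x : V × V => (‖f x.2‖₊ : ℝ≥0∞) ^ 2)
        (((volume : Measure V).restrict (ball (0 : V) R)).prod (volume : Measure V)) :=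
      (hf.nnnorm.aemeasurable.coe_nnreal_ennreal.pow_const 2).comp_quasiMeasurePreserving
        Measure.quasiMeasurePreserving_snd
    have h2 : Measurable fun x : V × V => en m (x.2 + x.1) :=
      (measurable_en m).comp (measurable_snd.add measurable_fst)
    exact h1.mul h2.aemeasurable
  rw [lintegral_lintegral_swap hmeas]
  refine lintegral_congr fun q => ?_
  rw [WW, lintegral_const_mul' _ _ (ENNReal.pow_ne_top ENNReal.coe_ne_top)]

lemma measurable_WW (m R : ℝ) : Measurable fun p : V => WW m R p := by
  have : Measurable fun x : V × V => en m (x.1 + x.2) :=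
    (measurable_en m).comp (measurable_fst.add measurable_snd)
  exact this.lintegral_prod_right'

lemma tendsto_gb (c mm : ℝ) {R : ℕ → ℝ} (hR : Tendsto R atTop atTop) :
    Tendsto (fun k => ((R k + c) ^ n - (R k - c) ^ n) * (R k + mm)
      / ((R k - c) * (R k) ^ n)) atTop (𝓝 0) := by
  have hx : Tendsto (fun k => (R k)⁻¹) atTop (𝓝 0) := by
    have := hR.inv_tendsto_atTop
    exact this
  set G : ℝ → ℝ := fun x => ((1 + c * x) ^ n - (1 - c * x) ^ n) * ((1 + mm * x) / (1 - c * x))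
    with hGdef
  have hG0 : G 0 = 0 := by simp [hGdef]
  have hGc : ContinuousAt G 0 := by
    have h1 : ContinuousAt (fun x : ℝ => (1 + c * x) ^ n - (1 - c * x) ^ n) 0 := by fun_prop
    have h2 : ContinuousAt (fun x : ℝ => (1 + mm * x) / (1 - c * x)) 0 := by
      refine ContinuousAt.div (by fun_prop) (by fun_prop) (by norm_num)
    exact h1.mul h2
  have hcomp : Tendsto (fun k => G ((R k)⁻¹)) atTop (𝓝 0) := by
    have h := hGc.tendsto.comp hx
    rwa [hG0] at h
  refine Tendsto.congr' ?_ hcomp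
  filter_upwards [hR.eventually_gt_atTop (max c 0)] with k hk
  have hk0 : 0 < R k := lt_of_le_of_lt (le_max_right c 0) hk
  have hkc : c < R k := lt_of_le_of_lt (le_max_left c 0) hk
  have h1 : R k ≠ 0 := ne_of_gt hk0
  have h2 : R k - c ≠ 0 := sub_ne_zero_of_ne hkc.ne'
  have e1 : 1 + c * (R k)⁻¹ = (R k + c) / R k := by field_simp
  have e2 : 1 - c * (R k)⁻¹ = (R k - c) / R k := by field_simp
  have e3 : 1 + mm * (R k)⁻¹ = (R k + mm) / R k := by field_simp
  rw [hGdef]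
  show ((1 + c * (R k)⁻¹) ^ n - (1 - c * (R k)⁻¹) ^ n) * ((1 + mm * (R k)⁻¹) / (1 - c * (R k)⁻¹))
      = _
  have e4 : (R k + mm) / R k / ((R k - c) / R k) = (R k + mm) / (R k - c) := by
    field_simp
  rw [e1, e2, e3, div_pow, div_pow, e4, div_sub_div_same, div_mul_div_comm,
    mul_comm ((R k) ^ n) (R k - c)]

lemma NN_ne_zero {m : ℝ} (hm : 0 < m) {R : ℝ} (hR : 0 < R) :
    (∫⁻ q in ball (0 : V) R, en m q) ≠ 0 := by
  refine ne_of_gt (lt_of_lt_of_le ?_ (NN_lb hm))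
  exact ENNReal.mul_pos (ENNReal.ofReal_pos.mpr (one_div_pos.mpr (by linarith))).ne'
    (measure_ball_pos volume 0 hR).ne'

lemma NN_ne_top {m : ℝ} (hm : 0 < m) (R : ℝ) :
    (∫⁻ q in ball (0 : V) R, en m q) ≠ ⊤ :=
  ne_of_lt (lt_of_le_of_lt (NN_ub hm R)
    (ENNReal.mul_lt_top ENNReal.ofReal_lt_top measure_ball_lt_top))

lemma u_le_three {m : ℝ} (hm : 0 < m) {R : ℝ} (hRm : m ≤ R) (p : V) :
    (∫⁻ q in ball (0 : V) R, en m q)⁻¹ * WW m R p ≤ 3 := by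
  set N := ∫⁻ q in ball (0 : V) R, en m q with hN
  have hR : 0 < R := lt_of_lt_of_le hm hRm
  have hN0 : N ≠ 0 := NN_ne_zero hm hR
  have hNt : N ≠ ⊤ := NN_ne_top hm R
  have hc : N⁻¹ * N = 1 := by rw [mul_comm]; exact ENNReal.mul_inv_cancel hN0 hNt
  have h1 : WW m R p ≤ N + volume (ball (0 : V) R) * ENNReal.ofReal (1 / R) := by
    rw [WW_eq]
    refine le_trans (center_le m hR p 0 ?_) ?_
    · intro q _ hnq
      exact le_of_not_gt fun hlt => hnq (mem_ball_zero_iff.mpr hlt)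
    · refine add_le_add_right (mul_le_mul_left ?_ _) _
      calc volume (ball p R \ ball (0 : V) R) ≤ volume (ball p R) :=
            measure_mono Set.diff_subset
        _ = volume (ball (0 : V) R) := Measure.addHaar_ball_center volume p R
  have h2 : volume (ball (0 : V) R) * ENNReal.ofReal (1 / R) ≤ N * 2 := by
    have hr : (1 : ℝ) / R ≤ 2 / (R + m) := by
      rw [div_le_div_iff₀ hR (by linarith)]; linarith
    calc volume (ball (0 : V) R) * ENNReal.ofReal (1 / R)
        ≤ volume (ball (0 : V) R) * ENNReal.ofReal (2 / (R + m)) :=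
          mul_le_mul_right (ENNReal.ofReal_le_ofReal hr) _
      _ = (ENNReal.ofReal (1 / (R + m)) * volume (ball (0 : V) R)) * 2 := by
          rw [show (2 : ℝ) / (R + m) = 1 / (R + m) * 2 by ring,
            ENNReal.ofReal_mul (le_of_lt (one_div_pos.mpr (by linarith))),
            ENNReal.ofReal_ofNat]
          ring
      _ ≤ N * 2 := mul_le_mul_left (NN_lb hm) _
  calc N⁻¹ * WW m R p ≤ N⁻¹ * (N + N * 2) :=
        mul_le_mul_right (h1.trans (add_le_add_right h2 _)) _
    _ = N⁻¹ * N + (N⁻¹ * N) * 2 := by ring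
    _ = 3 := by rw [hc]; norm_num

lemma u_tendsto_one {m : ℝ} (hm : 0 < m) {R : ℕ → ℝ} (hR : Tendsto R atTop atTop) (p : V) :
    Tendsto (fun k => (∫⁻ q in ball (0 : V) (R k), en m q)⁻¹ * WW m (R k) p) atTop (𝓝 1) := by
  rcases Nat.eq_zero_or_pos n with hn | hn
  · subst hn
    haveI : Subsingleton (EuclideanSpace ℝ (Fin 0)) := inferInstance
    have hev : ∀ᶠ k in atTop,
        (∫⁻ q in ball (0 : EuclideanSpace ℝ (Fin 0)) (R k), en m q)⁻¹ * WW m (R k) p = 1 := by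
      filter_upwards [hR.eventually_gt_atTop m] with k hk
      have hp : p = 0 := Subsingleton.elim p 0
      rw [WW_eq, hp, mul_comm]
      exact ENNReal.mul_inv_cancel (NN_ne_zero hm (hm.trans hk)) (NN_ne_top hm _)
    exact Tendsto.congr' (hev.mono fun k h => h.symm) tendsto_const_nhds
  · haveI : Nontrivial (EuclideanSpace ℝ (Fin n)) :=
      Module.nontrivial_of_finrank_pos (R := ℝ) (by simpa [finrank_euclideanSpace] using hn)
    set c := ‖p‖ with hcdef
    have hc : 0 ≤ c := norm_nonneg p
    set v := volume (ball (0 : V) 1) with hv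
    have hv0 : v ≠ 0 := (measure_ball_pos volume 0 one_pos).ne'
    set g : ℕ → ℝ := fun k => ((R k + c) ^ n - (R k - c) ^ n) * (R k + m)
      / ((R k - c) * (R k) ^ n) with hgdef
    have hof : Tendsto (fun k => ENNReal.ofReal (g k)) atTop (𝓝 0) := by
      simpa using ENNReal.tendsto_ofReal (tendsto_gb c m hR)
    have hkey : ∀ᶠ k in atTop,
        1 - ENNReal.ofReal (g k)
            ≤ (∫⁻ q in ball (0 : V) (R k), en m q)⁻¹ * WW m (R k) p
          ∧ (∫⁻ q in ball (0 : V) (R k), en m q)⁻¹ * WW m (R k) p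
            ≤ 1 + ENNReal.ofReal (g k) := by
      filter_upwards [hR.eventually_gt_atTop (max c m)] with k hk
      have hkc : c < R k := lt_of_le_of_lt (le_max_left _ _) hk
      have hkm : m < R k := lt_of_le_of_lt (le_max_right _ _) hk
      have hR0 : 0 < R k := hm.trans hkm
      have hsc : 0 < R k - c := by linarith
      set N := ∫⁻ q in ball (0 : V) (R k), en m q with hN
      have hN0 : N ≠ 0 := NN_ne_zero hm hR0
      have hNt : N ≠ ⊤ := NN_ne_top hm (R k)
      have hcan : N⁻¹ * N = 1 := by rw [mul_comm]; exact ENNReal.mul_inv_cancel hN0 hNt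
      set ann := volume (ball (0 : V) (R k + c) \ ball (0 : V) (R k - c))
        * ENNReal.ofReal (1 / (R k - c)) with hann
      -- annulus subsets
      have hsub1 : ball p (R k) \ ball (0 : V) (R k)
          ⊆ ball (0 : V) (R k + c) \ ball (0 : V) (R k - c) := by
        rintro q ⟨hq1, hq2⟩
        have hq1' : ‖q - p‖ < R k := by rwa [mem_ball, dist_eq_norm] at hq1
        have hq2' : R k ≤ ‖q‖ := le_of_not_gt fun h => hq2 (mem_ball_zero_iff.mpr h)
        have hup : ‖q‖ < R k + c := by
          have := norm_sub_norm_le q p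
          linarith [hcdef ▸ this]
        exact ⟨mem_ball_zero_iff.mpr hup, fun h => by
          have := mem_ball_zero_iff.mp h; linarith⟩
      have hsub2 : ball (0 : V) (R k) \ ball p (R k)
          ⊆ ball (0 : V) (R k + c) \ ball (0 : V) (R k - c) := by
        rintro q ⟨hq1, hq2⟩
        have hq1' : ‖q‖ < R k := mem_ball_zero_iff.mp hq1
        have hq2' : R k ≤ ‖q - p‖ := by
          rw [mem_ball, dist_eq_norm] at hq2; exact le_of_not_gt hq2
        have hlow : R k - c ≤ ‖q‖ := by
          have := norm_sub_le q p
          linarith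
        exact ⟨mem_ball_zero_iff.mpr (by linarith), fun h => by
          have := mem_ball_zero_iff.mp h; linarith⟩
      -- q outside one ball is far from origin
      have hWle : WW m (R k) p ≤ N + ann := by
        rw [WW_eq]
        refine le_trans (center_le m hsc p 0 ?_) (add_le_add_right ?_ _)
        · intro q _ hnq
          have : R k ≤ ‖q‖ := le_of_not_gt fun h => hnq (mem_ball_zero_iff.mpr h)
          linarith
        · exact mul_le_mul_left (measure_mono hsub1) _
      have hNle : N ≤ WW m (R k) p + ann := by
        rw [WW_eq]
        refine le_trans (center_le m hsc 0 p ?_) (add_le_add_right ?_ _)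
        · intro q _ hnq
          rw [mem_ball, dist_eq_norm] at hnq
          have h1 : R k ≤ ‖q - p‖ := le_of_not_gt hnq
          have := norm_sub_le q p
          linarith
        · exact mul_le_mul_left (measure_mono hsub2) _
      -- annulus bound
      have hD0 : 0 ≤ (R k + c) ^ n - (R k - c) ^ n :=
        sub_nonneg.mpr (pow_le_pow_left₀ (by linarith) (by linarith) n)
      have hd : volume (ball (0 : V) (R k + c) \ ball (0 : V) (R k - c))
          ≤ ENNReal.ofReal ((R k + c) ^ n - (R k - c) ^ n) * v := by
        have hsub : ball (0 : V) (R k - c) ⊆ ball (0 : V) (R k + c) :=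
          ball_subset_ball (by linarith)
        rw [measure_diff hsub measurableSet_ball.nullMeasurableSet measure_ball_lt_top.ne,
          Measure.addHaar_ball volume _ (by linarith : (0:ℝ) ≤ R k + c),
          Measure.addHaar_ball volume _ (by linarith : (0:ℝ) ≤ R k - c)]
        simp only [finrank_euclideanSpace, Fintype.card_fin]
        refine tsub_le_iff_right.mpr ?_
        rw [← add_mul, ← ENNReal.ofReal_add hD0 (pow_nonneg (by linarith) n)]
        refine mul_le_mul_left (le_of_eq ?_) _
        rw [sub_add_cancel]
      have hg0 : 0 ≤ g k := by
        rw [hgdef]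
        have : (0:ℝ) < (R k - c) * (R k) ^ n := by positivity
        positivity
      have hreal : ((R k + c) ^ n - (R k - c) ^ n) * (1 / (R k - c))
          = g k * (1 / (R k + m)) * (R k) ^ n := by
        rw [hgdef]
        field_simp
      have hannle : ann ≤ ENNReal.ofReal (g k) * N := by
        calc ann ≤ (ENNReal.ofReal ((R k + c) ^ n - (R k - c) ^ n) * v)
              * ENNReal.ofReal (1 / (R k - c)) := mul_le_mul_left hd _
          _ = ENNReal.ofReal (((R k + c) ^ n - (R k - c) ^ n) * (1 / (R k - c))) * v := by
              rw [ENNReal.ofReal_mul hD0]; ring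
          _ = ENNReal.ofReal (g k * (1 / (R k + m)) * (R k) ^ n) * v := by rw [hreal]
          _ = ENNReal.ofReal (g k)
              * (ENNReal.ofReal (1 / (R k + m)) * (ENNReal.ofReal ((R k) ^ n) * v)) := by
              rw [ENNReal.ofReal_mul (by positivity : (0:ℝ) ≤ g k * (1 / (R k + m))),
                ENNReal.ofReal_mul hg0]
              ring
          _ = ENNReal.ofReal (g k)
              * (ENNReal.ofReal (1 / (R k + m)) * volume (ball (0 : V) (R k))) := by
              rw [Measure.addHaar_ball volume _ hR0.le]
              simp only [finrank_euclideanSpace, Fintype.card_fin]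
              rw [hv]
          _ ≤ ENNReal.ofReal (g k) * N := mul_le_mul_right (NN_lb hm) _
      have hr : N⁻¹ * ann ≤ ENNReal.ofReal (g k) := by
        calc N⁻¹ * ann ≤ N⁻¹ * (ENNReal.ofReal (g k) * N) := mul_le_mul_right hannle _
          _ = ENNReal.ofReal (g k) * (N⁻¹ * N) := by ring
          _ = ENNReal.ofReal (g k) := by rw [hcan, mul_one]
      constructor
      · refine tsub_le_iff_right.mpr ?_
        calc (1 : ℝ≥0∞) = N⁻¹ * N := hcan.symm
          _ ≤ N⁻¹ * (WW m (R k) p + ann) := mul_le_mul_right hNle _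
          _ = N⁻¹ * WW m (R k) p + N⁻¹ * ann := mul_add _ _ _
          _ ≤ N⁻¹ * WW m (R k) p + ENNReal.ofReal (g k) := add_le_add_right hr _
      · calc N⁻¹ * WW m (R k) p ≤ N⁻¹ * (N + ann) := mul_le_mul_right hWle _
          _ = N⁻¹ * N + N⁻¹ * ann := mul_add _ _ _
          _ ≤ 1 + ENNReal.ofReal (g k) := by rw [hcan]; exact add_le_add_right hr _
    refine tendsto_of_tendsto_of_tendsto_of_le_of_le'
      (g := fun k => 1 - ENNReal.ofReal (g k)) (h := fun k => 1 + ENNReal.ofReal (g k))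
      ?_ ?_ (hkey.mono fun k h => h.1) (hkey.mono fun k h => h.2)
    · have := ENNReal.Tendsto.sub (tendsto_const_nhds (x := (1 : ℝ≥0∞)) (f := atTop)) hof
        (Or.inl ENNReal.one_ne_top)
      simpa using this
    · have := (tendsto_const_nhds (x := (1 : ℝ≥0∞)) (f := (atTop : Filter ℕ))).add hof
      simpa using this

lemma eLpNorm_two (f : V → ℂ) :
    eLpNorm f 2 volume = (∫⁻ q, (‖f q‖₊ : ℝ≥0∞) ^ 2) ^ (1 / 2 : ℝ) := by
  rw [eLpNorm_eq_lintegral_rpow_enorm_toReal two_ne_zero ENNReal.ofNat_ne_top]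
  norm_num
  rfl

end Aux13

open Aux13 in
theorem commutant_restricts_to_L2' {n : ℕ} (m : ℝ) (hm : 0 < m)
    (A : (EuclideanSpace ℝ (Fin n) → ℂ) → EuclideanSpace ℝ (Fin n) → ℂ) (C : ℝ)
    (hbdd : ∀ φ, MemL2r m φ → MemL2r m (A φ) ∧ rnorm m (A φ) ≤ C * rnorm m φ)
    (hcomm : ∀ a φ, MemL2r m φ → A (transl a φ) =ᵐ[volume] transl a (A φ)) :
    ∀ φ, MemLp φ 2 volume →
      MemLp (A φ) 2 volume ∧
        eLpNorm (A φ) 2 volume ≤ ENNReal.ofReal C * eLpNorm φ 2 volume := by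
  classical
  -- replace C by max C 0
  set C' := max C 0 with hC'def
  have hC' : (0:ℝ) ≤ C' := le_max_right _ _
  have hbdd' : ∀ ψ, MemL2r m ψ → MemL2r m (A ψ) ∧ rnorm m (A ψ) ≤ C' * rnorm m ψ :=
    fun ψ hψ => ⟨(hbdd ψ hψ).1, (hbdd ψ hψ).2.trans
      (mul_le_mul_of_nonneg_right (le_max_left _ _) (rnorm_nonneg _ _))⟩
  have hoC : ENNReal.ofReal C = ENNReal.ofReal C' := by
    rcases le_total 0 C with h | h
    · rw [hC'def, max_eq_left h]
    · rw [hC'def, max_eq_right h, ENNReal.ofReal_eq_zero.mpr h, ENNReal.ofReal_zero]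
  set oC := ENNReal.ofReal C' with hoCdef
  intro φ hφ
  have hφr := memL2r_of_memL2 hm hφ
  have hAφsm : AEStronglyMeasurable (A φ) volume := (hbdd' φ hφr).1.1
  set T := ∫⁻ q, (‖φ q‖₊ : ℝ≥0∞) ^ 2 with hT
  have hTfin : T ≠ ⊤ := by
    have h := hφ.eLpNorm_lt_top
    rw [eLpNorm_two] at h
    exact ((ENNReal.rpow_lt_top_iff_of_pos (by norm_num)).mp h).ne
  -- the sequence of radii
  set K₀ := max m 1 with hK₀
  set R : ℕ → ℝ := fun k => (k : ℝ) + K₀ with hRdef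
  have hRtop : Tendsto R atTop atTop :=
    tendsto_atTop_add_const_right _ _ tendsto_natCast_atTop_atTop
  have hRm : ∀ k, m ≤ R k := fun k => le_trans (le_max_left _ _)
    (le_add_of_nonneg_left (Nat.cast_nonneg k))
  have hR0 : ∀ k, 0 < R k := fun k => lt_of_lt_of_le hm (hRm k)
  set NN : ℕ → ℝ≥0∞ := fun k => ∫⁻ q in ball (0 : EuclideanSpace ℝ (Fin n)) (R k), en m q
    with hNN
  have hNN0 : ∀ k, NN k ≠ 0 := fun k => NN_ne_zero hm (hR0 k)
  have hNNt : ∀ k, NN k ≠ ⊤ := fun k => NN_ne_top hm (R k)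
  set u : ℕ → EuclideanSpace ℝ (Fin n) → ℝ≥0∞ :=
    fun k q => (NN k)⁻¹ * WW m (R k) q with hu
  have humeas : ∀ k, Measurable (u k) := fun k =>
    (measurable_WW m (R k)).const_mul _
  have hulim : ∀ p, Tendsto (fun k => u k p) atTop (𝓝 1) := fun p =>
    u_tendsto_one hm hRtop p
  have hub : ∀ k p, u k p ≤ 3 := fun k p => u_le_three hm (hRm k) p
  -- the weighted inequality
  have hw : ∀ k, (∫⁻ q, (‖A φ q‖₊ : ℝ≥0∞) ^ 2 * u k q)
      ≤ oC ^ 2 * ∫⁻ q, (‖φ q‖₊ : ℝ≥0∞) ^ 2 * u k q := by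
    intro k
    have hkey := key_pointwise hm hC' hbdd' hcomm hφ
    have h1 : (∫⁻ a in ball (0 : EuclideanSpace ℝ (Fin n)) (R k),
          ∫⁻ q, (‖A φ q‖₊ : ℝ≥0∞) ^ 2 * en m (q + a))
        ≤ ∫⁻ a in ball (0 : EuclideanSpace ℝ (Fin n)) (R k),
          oC ^ 2 * ∫⁻ q, (‖φ q‖₊ : ℝ≥0∞) ^ 2 * en m (q + a) :=
      lintegral_mono fun a => hkey a
    rw [lintegral_const_mul' _ _ (ENNReal.pow_ne_top ENNReal.ofReal_ne_top),
      swap_lemma m (R k) hAφsm, swap_lemma m (R k) hφ.1] at h1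
    have hNt' : (NN k)⁻¹ ≠ ⊤ := ENNReal.inv_ne_top.mpr (hNN0 k)
    have e1 : (∫⁻ q, (‖A φ q‖₊ : ℝ≥0∞) ^ 2 * u k q)
        = (NN k)⁻¹ * ∫⁻ q, (‖A φ q‖₊ : ℝ≥0∞) ^ 2 * WW m (R k) q := by
      rw [← lintegral_const_mul' _ _ hNt']
      exact lintegral_congr fun q => by simp only [hu]; ring
    have e2 : (∫⁻ q, (‖φ q‖₊ : ℝ≥0∞) ^ 2 * u k q)
        = (NN k)⁻¹ * ∫⁻ q, (‖φ q‖₊ : ℝ≥0∞) ^ 2 * WW m (R k) q := by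
      rw [← lintegral_const_mul' _ _ hNt']
      exact lintegral_congr fun q => by simp only [hu]; ring
    rw [e1, e2]
    calc (NN k)⁻¹ * ∫⁻ q, (‖A φ q‖₊ : ℝ≥0∞) ^ 2 * WW m (R k) q
        ≤ (NN k)⁻¹ * (oC ^ 2 * ∫⁻ q, (‖φ q‖₊ : ℝ≥0∞) ^ 2 * WW m (R k) q) :=
          mul_le_mul_right h1 _
      _ = oC ^ 2 * ((NN k)⁻¹ * ∫⁻ q, (‖φ q‖₊ : ℝ≥0∞) ^ 2 * WW m (R k) q) := by ring
  -- measurability of the integrands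
  have hAmeas : ∀ k, AEMeasurable (fun q => (‖A φ q‖₊ : ℝ≥0∞) ^ 2 * u k q) volume :=
    fun k => (hAφsm.nnnorm.aemeasurable.coe_nnreal_ennreal.pow_const 2).mul
      (humeas k).aemeasurable
  -- dominated convergence for the RHS
  have hRHS : Tendsto (fun k => ∫⁻ q, (‖φ q‖₊ : ℝ≥0∞) ^ 2 * u k q) atTop (𝓝 T) := by
    refine tendsto_lintegral_of_dominated_convergence'
      (bound := fun q => 3 * (‖φ q‖₊ : ℝ≥0∞) ^ 2)
      (fun k => (hφ.1.nnnorm.aemeasurable.coe_nnreal_ennreal.pow_const 2).mul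
        (humeas k).aemeasurable) ?_ ?_ ?_
    · intro k
      refine Filter.Eventually.of_forall fun q => ?_
      calc (‖φ q‖₊ : ℝ≥0∞) ^ 2 * u k q ≤ (‖φ q‖₊ : ℝ≥0∞) ^ 2 * 3 :=
            mul_le_mul_right (hub k q) _
        _ = 3 * (‖φ q‖₊ : ℝ≥0∞) ^ 2 := mul_comm _ _
    · rw [lintegral_const_mul' _ _ (by norm_num : (3:ℝ≥0∞) ≠ ⊤)]
      exact ENNReal.mul_ne_top (by norm_num) hTfin
    · refine Filter.Eventually.of_forall fun q => ?_
      have := ENNReal.Tendsto.const_mul (a := (‖φ q‖₊ : ℝ≥0∞) ^ 2) (hulim q)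
        (Or.inr (ENNReal.pow_ne_top ENNReal.coe_ne_top))
      simpa using this
  -- Fatou for the LHS
  have hLHS : (∫⁻ q, (‖A φ q‖₊ : ℝ≥0∞) ^ 2)
      ≤ liminf (fun k => ∫⁻ q, (‖A φ q‖₊ : ℝ≥0∞) ^ 2 * u k q) atTop := by
    have h0 : ∀ q, Tendsto (fun k => (‖A φ q‖₊ : ℝ≥0∞) ^ 2 * u k q) atTop
        (𝓝 ((‖A φ q‖₊ : ℝ≥0∞) ^ 2)) := fun q => by
      have := ENNReal.Tendsto.const_mul (a := (‖A φ q‖₊ : ℝ≥0∞) ^ 2) (hulim q)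
        (Or.inr (ENNReal.pow_ne_top ENNReal.coe_ne_top))
      simpa using this
    calc (∫⁻ q, (‖A φ q‖₊ : ℝ≥0∞) ^ 2)
        = ∫⁻ q, liminf (fun k => (‖A φ q‖₊ : ℝ≥0∞) ^ 2 * u k q) atTop :=
          lintegral_congr fun q => ((h0 q).liminf_eq).symm
      _ ≤ _ := lintegral_liminf_le' hAmeas
  -- combine
  have hS : (∫⁻ q, (‖A φ q‖₊ : ℝ≥0∞) ^ 2) ≤ oC ^ 2 * T := by
    refine hLHS.trans ?_
    have h1 : liminf (fun k => ∫⁻ q, (‖A φ q‖₊ : ℝ≥0∞) ^ 2 * u k q) atTop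
        ≤ liminf (fun k => oC ^ 2 * ∫⁻ q, (‖φ q‖₊ : ℝ≥0∞) ^ 2 * u k q) atTop :=
      liminf_le_liminf (Filter.Eventually.of_forall hw)
    have h2 : Tendsto (fun k => oC ^ 2 * ∫⁻ q, (‖φ q‖₊ : ℝ≥0∞) ^ 2 * u k q) atTop
        (𝓝 (oC ^ 2 * T)) :=
      ENNReal.Tendsto.const_mul hRHS (Or.inr (ENNReal.pow_ne_top ENNReal.ofReal_ne_top))
    exact h1.trans (le_of_eq h2.liminf_eq)
  have hoCt : oC ^ 2 < ⊤ := ENNReal.pow_lt_top ENNReal.ofReal_lt_top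
  refine ⟨⟨hAφsm, ?_⟩, ?_⟩
  · rw [eLpNorm_two]
    exact (ENNReal.rpow_lt_top_iff_of_pos (by norm_num)).mpr
      (lt_of_le_of_lt hS (ENNReal.mul_lt_top hoCt hTfin.lt_top))
  · rw [hoC, eLpNorm_two, eLpNorm_two]
    calc (∫⁻ q, (‖A φ q‖₊ : ℝ≥0∞) ^ 2) ^ (1/2 : ℝ)
        ≤ (oC ^ 2 * T) ^ (1/2 : ℝ) := ENNReal.rpow_le_rpow hS (by norm_num)
      _ = oC * T ^ (1/2 : ℝ) := by
          rw [ENNReal.mul_rpow_of_nonneg _ _ (by norm_num : (0:ℝ) ≤ 1/2)]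
          congr 1
          rw [← ENNReal.rpow_two, ← ENNReal.rpow_mul]
          norm_num


end

/-- every bounded (linear, a.e. well-defined) operator `A` on `L²_r(ℝⁿ)`
commuting with all translations `T_a` maps `L²(ℝⁿ) ⊂ L²_r(ℝⁿ)` into `L²(ℝⁿ)`, and its
restriction is bounded on `L²(ℝⁿ)` with norm at most (any bound `C` for) the norm of `A`
on `L²_r(ℝⁿ)`. -/
theorem commutant_restricts_to_L2 {n : ℕ} (m : ℝ) (hm : 0 < m)
    (A : (EuclideanSpace ℝ (Fin n) → ℂ) → EuclideanSpace ℝ (Fin n) → ℂ) (C : ℝ)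
    (hcong : ∀ φ ψ, MemL2r m φ → MemL2r m ψ → φ =ᵐ[volume] ψ → A φ =ᵐ[volume] A ψ)
    (hadd : ∀ φ ψ, MemL2r m φ → MemL2r m ψ → A (φ + ψ) =ᵐ[volume] A φ + A ψ)
    (hsmul : ∀ (c : ℂ) φ, MemL2r m φ → A (c • φ) =ᵐ[volume] c • A φ)
    (hbdd : ∀ φ, MemL2r m φ → MemL2r m (A φ) ∧ rnorm m (A φ) ≤ C * rnorm m φ)
    (hcomm : ∀ a φ, MemL2r m φ → A (transl a φ) =ᵐ[volume] transl a (A φ)) :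
    ∀ φ, MemLp φ 2 volume →
      MemLp (A φ) 2 volume ∧
        eLpNorm (A φ) 2 volume ≤ ENNReal.ofReal C * eLpNorm φ 2 volume :=
  commutant_restricts_to_L2' m hm A C hbdd hcomm
end
end
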